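/- arXiv:1702.06403 — 3 statements merged into one kernel-verified Lean document; each statement's English description precedes it below -/
import Mathlib

section
/- If the BMV statement holds for A and B_ε := B + εD for all ε > 0, where D = diag(1,2,...,n), and the corresponding measures μ_ε are nonnegative, then f(t) = Tr(exp(A - tB)) is also the Laplace transform of a nonnegative measure. In particular, in proving the BMV conjecture one may assume B has distinct positive eigenvalues. -/
open Matrix MeasureTheory
open scoped ComplexOrder

section BMVAux

open Set Filter Topology




lemma bmv_inner_exp {t : ℝ} (ht : 0 < t) (s : ℝ) :
    ENNReal.ofReal (Real.exp (-(t * s)))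
      = ∫⁻ u in Set.Ioi s, ENNReal.ofReal (t * Real.exp (-(t * u))) := by
  have hint : IntegrableOn (fun u : ℝ => t * Real.exp (-(t * u))) (Set.Ioi s) := by
    have := (exp_neg_integrableOn_Ioi s ht).const_mul t
    simpa [neg_mul, IntegrableOn] using this
  have hval : ∫ u in Set.Ioi s, t * Real.exp (-(t * u)) = Real.exp (-(t * s)) := by
    have hderiv : ∀ x ∈ Set.Ici s,
        HasDerivAt (fun u : ℝ => -Real.exp (-(t * u))) (t * Real.exp (-(t * x))) x := by
      intro x _
      have h1 : HasDerivAt (fun u : ℝ => -(t * u)) (-t) x := by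
        have := ((hasDerivAt_id x).const_mul t).neg
        simp only [id, mul_one] at this
        exact this
      have h2 := (Real.hasDerivAt_exp (-(t * x))).comp x h1
      have := h2.neg
      exact this.congr_deriv (by ring)
    have hlim : Tendsto (fun u : ℝ => -Real.exp (-(t * u))) atTop (𝓝 0) := by
      rw [show (0 : ℝ) = -0 by ring]
      refine Tendsto.neg ?_
      refine Real.tendsto_exp_atBot.comp ?_
      have := tendsto_id.const_mul_atTop ht (f := fun u : ℝ => u) (l := atTop)
      exact (tendsto_neg_atBot_iff.mpr this)
    have := integral_Ioi_of_hasDerivAt_of_tendsto' hderiv hint hlim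
    rw [this]; ring
  rw [← hval, ofReal_integral_eq_lintegral_ofReal hint]
  filter_upwards with u
  positivity

lemma bmv_laplace_repr (ν : Measure ℝ) [IsFiniteMeasure ν] (hν : ν (Set.Iio 0) = 0)
    {t : ℝ} (ht : 0 < t) :
    ∫ s in Set.Ici 0, Real.exp (-(t * s)) ∂ν
      = ∫ u in Set.Ioi (0 : ℝ), t * Real.exp (-(t * u)) * (ν (Set.Iio u)).toReal := by
  have hrest : ν.restrict (Set.Ici 0) = ν := by
    refine Measure.restrict_eq_self_of_ae_mem ?_
    have : ∀ᵐ x ∂ν, x ∉ Set.Iio (0:ℝ) := ae_iff.mpr (by simp only [not_not]; exact hν)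
    filter_upwards [this] with x hx
    simpa [Set.mem_Iio, Set.mem_Ici, not_lt] using hx
  -- measurability of the CDF-type function
  have hFmono : Monotone fun u : ℝ => (ν (Set.Iio u)).toReal := by
    intro a b hab
    exact ENNReal.toReal_mono (measure_ne_top ν _) (measure_mono (Set.Iio_subset_Iio hab))
  have hFmeas : Measurable fun u : ℝ => (ν (Set.Iio u)).toReal := hFmono.measurable
  -- key lintegral identity
  have key : ∫⁻ s, ENNReal.ofReal (Real.exp (-(t * s))) ∂ν
      = ∫⁻ u in Set.Ioi (0 : ℝ),
          ENNReal.ofReal (t * Real.exp (-(t * u))) * ν (Set.Iio u) := by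
    have hswap : ∫⁻ s, (∫⁻ u, (Set.Ioi s).indicator
          (fun u => ENNReal.ofReal (t * Real.exp (-(t * u)))) u ∂volume) ∂ν
        = ∫⁻ u, (∫⁻ s, (Set.Ioi s).indicator
          (fun u => ENNReal.ofReal (t * Real.exp (-(t * u)))) u ∂ν) ∂volume := by
      refine lintegral_lintegral_swap ?_
      have : (Function.uncurry fun s u => (Set.Ioi s).indicator
            (fun u => ENNReal.ofReal (t * Real.exp (-(t * u)))) u)
          = Set.indicator {p : ℝ × ℝ | p.1 < p.2}
            (fun p => ENNReal.ofReal (t * Real.exp (-(t * p.2)))) := by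
        ext ⟨s, u⟩
        simp [Function.uncurry, Set.indicator_apply, Set.mem_Ioi]
      rw [this]
      exact (Measurable.aemeasurable <|
        (measurable_const.mul ((Real.measurable_exp.comp
          ((measurable_const.mul measurable_snd).neg)))).ennreal_ofReal.indicator
          (measurableSet_lt measurable_fst measurable_snd))
    calc ∫⁻ s, ENNReal.ofReal (Real.exp (-(t * s))) ∂ν
        = ∫⁻ s, (∫⁻ u in Set.Ioi s, ENNReal.ofReal (t * Real.exp (-(t * u))) ∂volume) ∂ν := by
          simp_rw [bmv_inner_exp ht]
      _ = ∫⁻ s, (∫⁻ u, (Set.Ioi s).indicator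
            (fun u => ENNReal.ofReal (t * Real.exp (-(t * u)))) u ∂volume) ∂ν := by
          simp_rw [lintegral_indicator measurableSet_Ioi]
      _ = ∫⁻ u, (∫⁻ s, (Set.Ioi s).indicator
            (fun u => ENNReal.ofReal (t * Real.exp (-(t * u)))) u ∂ν) ∂volume := hswap
      _ = ∫⁻ u, ENNReal.ofReal (t * Real.exp (-(t * u))) * ν (Set.Iio u) ∂volume := by
          congr 1; funext u
          have : (fun s => (Set.Ioi s).indicator
              (fun u => ENNReal.ofReal (t * Real.exp (-(t * u)))) u)
              = (Set.Iio u).indicator (fun _ => ENNReal.ofReal (t * Real.exp (-(t * u)))) := by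
            funext s
            simp [Set.indicator_apply, Set.mem_Ioi, Set.mem_Iio]
          rw [this, lintegral_indicator_const measurableSet_Iio]
      _ = ∫⁻ u in Set.Ioi (0 : ℝ),
            ENNReal.ofReal (t * Real.exp (-(t * u))) * ν (Set.Iio u) ∂volume := by
          rw [← lintegral_indicator measurableSet_Ioi]
          congr 1; funext u
          by_cases hu : 0 < u
          · simp [Set.indicator_apply, Set.mem_Ioi, hu]
          · have : ν (Set.Iio u) = 0 :=
              measure_mono_null (Set.Iio_subset_Iio (not_lt.mp hu)) hν
            simp [Set.indicator_apply, Set.mem_Ioi, hu, this]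
  -- convert both sides from Bochner to lintegral
  have hL : ∫ s in Set.Ici 0, Real.exp (-(t * s)) ∂ν
      = (∫⁻ s, ENNReal.ofReal (Real.exp (-(t * s))) ∂ν).toReal := by
    rw [hrest, integral_eq_lintegral_of_nonneg_ae]
    · filter_upwards with s; positivity
    · exact (Real.continuous_exp.comp (continuous_const.mul continuous_id).neg
        ).aestronglyMeasurable
  have hR : ∫ u in Set.Ioi (0 : ℝ), t * Real.exp (-(t * u)) * (ν (Set.Iio u)).toReal
      = (∫⁻ u in Set.Ioi (0 : ℝ),
          ENNReal.ofReal (t * Real.exp (-(t * u))) * ν (Set.Iio u)).toReal := by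
    rw [integral_eq_lintegral_of_nonneg_ae]
    · congr 1
      refine lintegral_congr fun u => ?_
      rw [ENNReal.ofReal_mul (by positivity), ENNReal.ofReal_toReal (measure_ne_top ν _)]
    · filter_upwards with u
      have h1 : (0:ℝ) ≤ t * Real.exp (-(t * u)) := by positivity
      exact mul_nonneg h1 ENNReal.toReal_nonneg
    · exact ((continuous_const.mul (Real.continuous_exp.comp
        (continuous_const.mul continuous_id).neg)).measurable.mul hFmeas
        ).aestronglyMeasurable
  rw [hL, hR, key]



lemma bmv_traceexp_continuous (n : ℕ) :
    Continuous (fun M : Matrix (Fin n) (Fin n) ℂ => (NormedSpace.exp M).trace) := by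
  letI : NormedRing (Matrix (Fin n) (Fin n) ℂ) := Matrix.linftyOpNormedRing
  letI : NormedAlgebra ℂ (Matrix (Fin n) (Fin n) ℂ) := Matrix.linftyOpNormedAlgebra
  letI : NormedAlgebra ℚ (Matrix (Fin n) (Fin n) ℂ) := Matrix.linftyOpNormedAlgebra
  haveI : CompleteSpace (Matrix (Fin n) (Fin n) ℂ) := FiniteDimensional.complete ℂ _
  have htr : Continuous (fun M : Matrix (Fin n) (Fin n) ℂ => M.trace) := by
    unfold Matrix.trace
    exact continuous_finset_sum _ fun i _ =>
      (continuous_apply (i : Fin n)).comp (continuous_apply i)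
  exact htr.comp NormedSpace.exp_continuous

lemma bmv_matrix_line_continuous (n : ℕ) (A B D : Matrix (Fin n) (Fin n) ℂ) (t : ℝ) :
    Continuous (fun x : ℝ => A - t • (B + x • D)) := by
  refine continuous_const.sub (Continuous.const_smul ?_ t)
  exact continuous_const.add (continuous_id.smul continuous_const)


lemma bmv_complex_real (μ : Measure ℝ) (t : ℝ) :
    (∫ s in Set.Ici (0:ℝ), Complex.exp (-(t * s)) ∂μ)
      = ((∫ s in Set.Ici (0:ℝ), Real.exp (-(t * s)) ∂μ : ℝ) : ℂ) := by
  have h : ∀ s : ℝ, Complex.exp (-(t * s)) = ((Real.exp (-(t * s)) : ℝ) : ℂ) := by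
    intro s
    rw [Complex.ofReal_exp]
    norm_cast
  simp_rw [h]
  exact integral_ofReal



theorem bmv_reduction_to_distinct_eigenvalues' (n : ℕ) (A B : Matrix (Fin n) (Fin n) ℂ)
    (D : Matrix (Fin n) (Fin n) ℂ)
    (hε : ∀ ε : ℝ, 0 < ε → ∃ μ : Measure ℝ, IsFiniteMeasure μ ∧ μ (Set.Iio 0) = 0 ∧
      ∀ t : ℝ, 0 ≤ t → (NormedSpace.exp (A - t • (B + ε • D))).trace
        = ∫ s in Set.Ici (0 : ℝ), Complex.exp (-(t * s)) ∂μ) :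
    ∃ μ : Measure ℝ, IsFiniteMeasure μ ∧ μ (Set.Iio 0) = 0 ∧
      ∀ t : ℝ, 0 ≤ t → (NormedSpace.exp (A - t • B)).trace
        = ∫ s in Set.Ici (0 : ℝ), Complex.exp (-(t * s)) ∂μ := by
  classical
  choose ν hfin h0 hrep using fun k : ℕ => hε ((k : ℝ) + 1)⁻¹ (by positivity)
  -- mass is constant
  have hzero : ∀ k, (NormedSpace.exp A).trace = ((((ν k) (Set.Ici 0)).toReal : ℝ) : ℂ) := by
    intro k
    have h := hrep k 0 le_rfl
    simp only [zero_smul, sub_zero, Complex.ofReal_zero, zero_mul, neg_zero,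
      Complex.exp_zero] at h
    rw [h, setIntegral_const]
    simp [measureReal_def]
  set c : ℝ := ((ν 0) (Set.Ici 0)).toReal with hc_def
  have hmass : ∀ k, ((ν k) (Set.Ici 0)).toReal = c := fun k =>
    Complex.ofReal_inj.mp ((hzero k).symm.trans (hzero 0))
  set F : ℕ → ℝ → ℝ := fun k u => ((ν k) (Set.Iio u)).toReal with hF_def
  have hFmono : ∀ k, Monotone (F k) := by
    intro k a b hab
    haveI := hfin k
    exact ENNReal.toReal_mono (measure_ne_top _ _) (measure_mono (Set.Iio_subset_Iio hab))
  have hFnn : ∀ k u, 0 ≤ F k u := fun k u => ENNReal.toReal_nonneg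
  have hFle : ∀ k u, F k u ≤ c := by
    intro k u
    haveI := hfin k
    have h1 : (ν k) (Set.Iio u) ≤ (ν k) (Set.Ici 0) := by
      calc (ν k) (Set.Iio u) ≤ (ν k) Set.univ := measure_mono (Set.subset_univ _)
        _ = (ν k) (Set.Iio 0 ∪ Set.Ici 0) := by rw [Set.Iio_union_Ici]
        _ ≤ (ν k) (Set.Iio 0) + (ν k) (Set.Ici 0) := measure_union_le _ _
        _ = (ν k) (Set.Ici 0) := by rw [h0 k, zero_add]
    rw [← hmass k]
    exact ENNReal.toReal_mono (measure_ne_top _ _) h1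
  have hF0 : ∀ k (u : ℝ), u ≤ 0 → F k u = 0 := by
    intro k u hu
    simp only [hF_def]
    rw [measure_mono_null (Set.Iio_subset_Iio hu) (h0 k)]
    simp
  -- Helly-type subsequence extraction
  haveI : CompactSpace (Set.Icc (0:ℝ) c) := isCompact_iff_compactSpace.mp isCompact_Icc
  obtain ⟨a, φ, hφ, ha⟩ := CompactSpace.tendsto_subseq
      (fun k => (fun q : ℚ => (⟨F k q, hFnn k q, hFle k q⟩ : Set.Icc (0:ℝ) c)))
  set G : ℚ → ℝ := fun q => (a q : ℝ) with hG_def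
  have hG : ∀ q : ℚ, Tendsto (fun j => F (φ j) q) atTop (𝓝 (G q)) := by
    intro q
    have h1 := tendsto_pi_nhds.mp ha q
    exact (continuous_subtype_val.tendsto _).comp h1
  have hGnn : ∀ q, 0 ≤ G q := fun q => (a q).2.1
  have hGle : ∀ q, G q ≤ c := fun q => (a q).2.2
  -- the monotone limit function g
  have hne : ∀ x : ℝ, Nonempty {q : ℚ // x < (q : ℝ)} := fun x =>
    let ⟨q, hq⟩ := exists_rat_gt x; ⟨⟨q, hq⟩⟩
  set g : ℝ → ℝ := fun x => ⨅ q : {q : ℚ // x < (q : ℝ)}, G q.1 with hg_def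
  have hbdd : ∀ x : ℝ, BddBelow (Set.range fun q : {q : ℚ // x < (q : ℝ)} => G q.1) :=
    fun x => ⟨0, by rintro y ⟨i, rfl⟩; exact hGnn _⟩
  have hg_le_G : ∀ (x : ℝ) (q : ℚ), x < (q : ℝ) → g x ≤ G q := fun x q hq =>
    ciInf_le (hbdd x) ⟨q, hq⟩
  have hG_le_g : ∀ (x : ℝ) (q : ℚ), (q : ℝ) ≤ x → G q ≤ g x := by
    intro x q hq
    haveI := hne x
    refine le_ciInf fun p => ?_
    have hqp : (q : ℝ) ≤ (p.1 : ℝ) := le_of_lt (lt_of_le_of_lt hq p.2)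
    exact le_of_tendsto_of_tendsto' (hG q) (hG p.1) fun j => hFmono _ hqp
  have hgmono : Monotone g := by
    intro x y hxy
    haveI := hne y
    exact le_ciInf fun q => hg_le_G x q.1 (lt_of_le_of_lt hxy q.2)
  have hgnn : ∀ x, 0 ≤ g x := fun x => by
    haveI := hne x; exact le_ciInf fun q => hGnn _
  have hgle : ∀ x, g x ≤ c := fun x =>
    let ⟨q, hq⟩ := exists_rat_gt x
    le_trans (hg_le_G x q hq) (hGle q)
  have hGzero : ∀ q : ℚ, (q : ℝ) ≤ 0 → G q = 0 := by
    intro q hq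
    refine tendsto_nhds_unique (hG q) ?_
    have : (fun j => F (φ j) q) = fun _ => (0:ℝ) := funext fun j => hF0 _ _ hq
    rw [this]
    exact tendsto_const_nhds
  have hgzero : ∀ x : ℝ, x < 0 → g x = 0 := by
    intro x hx
    obtain ⟨q, hq1, hq2⟩ := exists_rat_btwn hx
    exact le_antisymm (by simpa [hGzero q hq2.le] using hg_le_G x q hq1) (hgnn x)
  -- convergence of the CDFs at continuity points of g
  have hconv : ∀ x : ℝ, ContinuousAt g x →
      Tendsto (fun j => F (φ j) x) atTop (𝓝 (g x)) := by
    intro x hx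
    rw [tendsto_order]
    constructor
    · intro b hb
      have hev : ∀ᶠ y in 𝓝[<] x, b < g y :=
        (hx.eventually (eventually_gt_nhds hb)).filter_mono nhdsWithin_le_nhds
      obtain ⟨y, hy, hy_lt⟩ := (hev.and (eventually_mem_nhdsWithin)).exists
      obtain ⟨q, hq1, hq2⟩ := exists_rat_btwn (show y < x from hy_lt)
      have hbG : b < G q := lt_of_lt_of_le hy (hg_le_G y q hq1)
      filter_upwards [(hG q).eventually (eventually_gt_nhds hbG)] with j hj
      exact lt_of_lt_of_le hj (hFmono _ (le_of_lt hq2))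
    · intro b hb
      obtain ⟨⟨q, hq⟩, hqb⟩ := exists_lt_of_ciInf_lt (show g x < b from hb)
      filter_upwards [(hG q).eventually (eventually_lt_nhds hqb)] with j hj
      exact lt_of_le_of_lt (hFmono _ (le_of_lt hq)) hj
  -- the Stieltjes measure
  set S := hgmono.stieltjesFunction with hS_def
  have hSval : ∀ x, S x = Function.rightLim g x := fun x => hgmono.stieltjesFunction_eq x
  have hSzero : ∀ x : ℝ, x < 0 → S x = 0 := by
    intro x hx
    rw [hSval]
    refine rightLim_eq_of_tendsto ?_
    refine tendsto_const_nhds.congr' ?_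
    filter_upwards [Ioo_mem_nhdsGT_of_mem (Set.left_mem_Ico.mpr hx)] with y hy
    exact (hgzero y hy.2).symm
  have hSatBot : Tendsto S atBot (𝓝 0) := by
    refine tendsto_const_nhds.congr' ?_
    filter_upwards [eventually_le_atBot (-1 : ℝ)] with x hx
    exact (hSzero x (by linarith)).symm
  have hSnn : ∀ x, 0 ≤ S x := fun x =>
    le_trans (hgnn x) (by rw [hSval]; exact hgmono.le_rightLim le_rfl)
  have hSle : ∀ x, S x ≤ c := fun x => by
    rw [hSval]
    exact le_trans (hgmono.rightLim_le (lt_add_one x)) (hgle _)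
  set μ := S.measure with hμ_def
  have hμIic : ∀ x, μ (Set.Iic x) = ENNReal.ofReal (S x) := by
    intro x
    rw [hμ_def, S.measure_Iic hSatBot x]
    simp
  have hμfin : IsFiniteMeasure μ := by
    constructor
    have h1 : Set.univ = ⋃ k : ℕ, Set.Iic (k : ℝ) := by
      ext x
      simp only [Set.mem_univ, Set.mem_iUnion, Set.mem_Iic, true_iff]
      obtain ⟨k, hk⟩ := exists_nat_ge x
      exact ⟨k, hk⟩
    rw [h1]
    have h2 : μ (⋃ k : ℕ, Set.Iic (k : ℝ)) ≤ ENNReal.ofReal c := by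
      rw [(Directed.measure_iUnion (fun i j => ?_) : μ (⋃ k : ℕ, Set.Iic (k:ℝ)) = _)]
      · exact iSup_le fun k => by rw [hμIic]; exact ENNReal.ofReal_le_ofReal (hSle _)
      · rcases le_total i j with h | h
        · exact ⟨j, Set.Iic_subset_Iic.mpr (by exact_mod_cast h), subset_rfl⟩
        · exact ⟨i, subset_rfl, Set.Iic_subset_Iic.mpr (by exact_mod_cast h)⟩
    exact lt_of_le_of_lt h2 ENNReal.ofReal_lt_top
  haveI := hμfin
  have hμIio0 : μ (Set.Iio 0) = 0 := by
    have h1 : Set.Iio (0:ℝ) = ⋃ k : ℕ, Set.Iic (-(((k:ℝ) + 1)⁻¹)) := by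
      ext x
      simp only [Set.mem_Iio, Set.mem_iUnion, Set.mem_Iic]
      constructor
      · intro hx
        obtain ⟨k, hk⟩ := exists_nat_gt (-x)⁻¹
        refine ⟨k, ?_⟩
        have hx' : (0:ℝ) < -x := by linarith
        have h2 : ((k:ℝ) + 1)⁻¹ < -x := by
          rw [inv_lt_comm₀ (by positivity) hx']
          linarith
        linarith
      · rintro ⟨k, hk⟩
        have : (0:ℝ) < ((k:ℝ) + 1)⁻¹ := by positivity
        linarith
    rw [h1]
    refine measure_iUnion_null fun k => ?_
    rw [hμIic, hSzero _ (neg_lt_zero.mpr (by positivity))]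
    simp
  -- identification of the limit CDF
  have hid : ∀ x : ℝ, ContinuousAt g x → (μ (Set.Iio x)).toReal = g x := by
    intro x hx
    have hSx : S x = g x := by
      rw [hSval]
      exact rightLim_eq_of_tendsto
        (hx.tendsto.mono_left nhdsWithin_le_nhds)
    have hub : (μ (Set.Iio x)).toReal ≤ g x := by
      have h1 : μ (Set.Iio x) ≤ ENNReal.ofReal (S x) := by
        rw [← hμIic]; exact measure_mono Set.Iio_subset_Iic_self
      have h2 := ENNReal.toReal_mono ENNReal.ofReal_ne_top h1
      rwa [ENNReal.toReal_ofReal (hSnn x), hSx] at h2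
    have hlb : ∀ δ : ℝ, 0 < δ → g x - δ ≤ (μ (Set.Iio x)).toReal := by
      intro δ hδ
      have hev : ∀ᶠ y in 𝓝[<] x, g x - δ < g y :=
        (hx.eventually (eventually_gt_nhds (by linarith))).filter_mono nhdsWithin_le_nhds
      obtain ⟨y, hy, hy_lt⟩ := (hev.and (eventually_mem_nhdsWithin)).exists
      have h3 : ENNReal.ofReal (g y) ≤ μ (Set.Iio x) := by
        calc ENNReal.ofReal (g y) ≤ ENNReal.ofReal (S y) :=
              ENNReal.ofReal_le_ofReal (by rw [hSval]; exact hgmono.le_rightLim le_rfl)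
          _ = μ (Set.Iic y) := (hμIic y).symm
          _ ≤ μ (Set.Iio x) := measure_mono (Set.Iic_subset_Iio.mpr hy_lt)
      have h4 := ENNReal.toReal_mono (measure_ne_top μ _) h3
      rw [ENNReal.toReal_ofReal (hgnn y)] at h4
      linarith
    refine le_antisymm hub (le_of_forall_sub_le fun δ hδ => hlb δ hδ)
  -- a.e. convergence on (0, ∞)
  have haeconv : ∀ᵐ u ∂(volume.restrict (Set.Ioi (0:ℝ))),
      Tendsto (fun j => F (φ j) u) atTop (𝓝 ((μ (Set.Iio u)).toReal)) := by
    have hcount : (volume.restrict (Set.Ioi (0:ℝ))) {x | ¬ContinuousAt g x} = 0 := by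
      have h1 : volume {x | ¬ContinuousAt g x} = 0 :=
        (hgmono.countable_not_continuousAt).measure_zero _
      exact nonpos_iff_eq_zero.mp
        ((Measure.le_iff'.mp Measure.restrict_le_self _).trans h1.le)
    rw [ae_iff]
    refine measure_mono_null (fun u hu => ?_) hcount
    simp only [Set.mem_setOf_eq] at hu ⊢
    intro hcont
    exact hu (by rw [hid u hcont]; exact hconv u hcont)
  -- ε (φ j) → 0
  have hεto0 : Tendsto (fun j : ℕ => (((φ j : ℕ) : ℝ) + 1)⁻¹) atTop (𝓝 0) := by
    have h1 : Tendsto (fun k : ℕ => ((k : ℝ) + 1)⁻¹) atTop (𝓝 0) := by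
      simpa [one_div] using tendsto_one_div_add_atTop_nhds_zero_nat (𝕜 := ℝ)
    exact h1.comp hφ.tendsto_atTop
  -- the Laplace transform identity for t > 0
  have hmain : ∀ t : ℝ, 0 < t → (NormedSpace.exp (A - t • B)).trace
      = ((∫ s in Set.Ici (0:ℝ), Real.exp (-(t * s)) ∂μ : ℝ) : ℂ) := by
    intro t ht
    have hC : Tendsto
        (fun j => (NormedSpace.exp (A - t • (B + (((φ j : ℕ) : ℝ) + 1)⁻¹ • D))).trace)
        atTop (𝓝 ((NormedSpace.exp (A - t • B)).trace)) := by
      have hcont := (bmv_traceexp_continuous n).comp (bmv_matrix_line_continuous n A B D t)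
      have h2 := (hcont.tendsto 0).comp hεto0
      simpa [Function.comp_def] using h2
    have hreal : ∀ j, (NormedSpace.exp (A - t • (B + (((φ j : ℕ) : ℝ) + 1)⁻¹ • D))).trace
        = ((∫ u in Set.Ioi (0:ℝ), t * Real.exp (-(t * u)) * F (φ j) u : ℝ) : ℂ) := by
      intro j
      haveI := hfin (φ j)
      rw [hrep (φ j) t ht.le, bmv_complex_real, bmv_laplace_repr (ν (φ j)) (h0 (φ j)) ht]
    have hDCT : Tendsto (fun j => ∫ u in Set.Ioi (0:ℝ), t * Real.exp (-(t * u)) * F (φ j) u)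
        atTop (𝓝 (∫ u in Set.Ioi (0:ℝ), t * Real.exp (-(t * u)) * (μ (Set.Iio u)).toReal)) := by
      refine tendsto_integral_filter_of_dominated_convergence
        (fun u => t * Real.exp (-(t * u)) * c) ?_ ?_ ?_ ?_
      · exact Eventually.of_forall fun j =>
          ((continuous_const.mul (Real.continuous_exp.comp
            (continuous_const.mul continuous_id).neg)).measurable.mul
            ((hFmono (φ j)).measurable)).aestronglyMeasurable
      · refine Eventually.of_forall fun j => Eventually.of_forall fun u => ?_
        have h1 : (0:ℝ) ≤ t * Real.exp (-(t * u)) := by positivity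
        rw [Real.norm_eq_abs, abs_of_nonneg (mul_nonneg h1 (hFnn _ _))]
        exact mul_le_mul_of_nonneg_left (hFle _ _) h1
      · have h2 : IntegrableOn (fun u : ℝ => t * Real.exp (-(t * u))) (Set.Ioi 0) := by
          have := (exp_neg_integrableOn_Ioi 0 ht).const_mul t
          simpa [neg_mul, IntegrableOn] using this
        exact h2.mul_const c
      · exact haeconv.mono fun u hu => (hu.const_mul _)
    have hRC : Tendsto
        (fun j => ((∫ u in Set.Ioi (0:ℝ), t * Real.exp (-(t * u)) * F (φ j) u : ℝ) : ℂ))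
        atTop (𝓝 ((∫ u in Set.Ioi (0:ℝ),
          t * Real.exp (-(t * u)) * (μ (Set.Iio u)).toReal : ℝ) : ℂ)) :=
      (Complex.continuous_ofReal.tendsto _).comp hDCT
    have hkey := tendsto_nhds_unique (hC.congr hreal) hRC
    rw [hkey, bmv_laplace_repr μ hμIio0 ht]
  refine ⟨μ, hμfin, hμIio0, fun t ht => ?_⟩
  rcases ht.eq_or_lt with h | h
  · -- t = 0
    subst h
    have hTm : Tendsto (fun m : ℕ => ((m : ℝ) + 1)⁻¹) atTop (𝓝 0) := by
      simpa [one_div] using tendsto_one_div_add_atTop_nhds_zero_nat (𝕜 := ℝ)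
    have h1 : Tendsto (fun m : ℕ => (NormedSpace.exp (A - ((m:ℝ) + 1)⁻¹ • B)).trace)
        atTop (𝓝 ((NormedSpace.exp (A - (0:ℝ) • B)).trace)) := by
      have hline : Continuous (fun x : ℝ => A - x • B) :=
        continuous_const.sub (continuous_id.smul continuous_const)
      exact (((bmv_traceexp_continuous n).comp hline).tendsto 0).comp hTm
    have h3 : Tendsto (fun m : ℕ => ∫ s in Set.Ici (0:ℝ),
        Real.exp (-(((m:ℝ) + 1)⁻¹ * s)) ∂μ)
        atTop (𝓝 (∫ s in Set.Ici (0:ℝ), (1:ℝ) ∂μ)) := by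
      refine tendsto_integral_filter_of_dominated_convergence (fun _ => (1:ℝ)) ?_ ?_ ?_ ?_
      · exact Eventually.of_forall fun m => (Real.continuous_exp.comp
          (continuous_const.mul continuous_id).neg).aestronglyMeasurable
      · refine Eventually.of_forall fun m => ?_
        filter_upwards [ae_restrict_mem measurableSet_Ici] with s hs
        rw [Real.norm_eq_abs, abs_of_nonneg (Real.exp_nonneg _)]
        exact Real.exp_le_one_iff.mpr (neg_nonpos.mpr (mul_nonneg (by positivity) hs))
      · exact integrableOn_const (measure_lt_top _ _).ne
      · refine Eventually.of_forall fun s => ?_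
        have h4 : Tendsto (fun m : ℕ => -(((m:ℝ) + 1)⁻¹ * s)) atTop (𝓝 0) := by
          have := (hTm.mul_const s).neg
          simpa using this
        have h5 := (Real.continuous_exp.tendsto 0).comp h4
        simpa [Function.comp_def] using h5
    have h2 : ∀ m : ℕ, (NormedSpace.exp (A - ((m:ℝ) + 1)⁻¹ • B)).trace
        = ((∫ s in Set.Ici (0:ℝ), Real.exp (-(((m:ℝ) + 1)⁻¹ * s)) ∂μ : ℝ) : ℂ) :=
      fun m => hmain _ (by positivity)
    have h6 := tendsto_nhds_unique (h1.congr h2)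
      ((Complex.continuous_ofReal.tendsto _).comp h3)
    rw [h6]
    simp only [Complex.ofReal_zero, zero_mul, neg_zero, Complex.exp_zero]
    rw [setIntegral_const, setIntegral_const]
    simp
  · rw [hmain t h, bmv_complex_real]


/-- If the BMV statement holds for `A` and `B_ε = B + ε D`
(`D = diag(1,…,n)`) for all `ε > 0`, with nonnegative measures `μ_ε`, then
`f(t) = Tr exp (A - t B)` is also the Laplace transform of a nonnegative measure.
Thus one may assume `B` has distinct positive eigenvalues. -/
theorem bmv_reduction_to_distinct_eigenvalues (n : ℕ) (A B : Matrix (Fin n) (Fin n) ℂ)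
    (hA : A.IsHermitian) (hBpsd : B.PosSemidef)
    (d : Fin n → ℝ) (hd : ∀ j, 0 ≤ d j)
    (hBdiag : B = Matrix.diagonal fun j => (d j : ℂ))
    (D : Matrix (Fin n) (Fin n) ℂ)
    (hD : D = Matrix.diagonal fun j : Fin n => ((j : ℕ) + 1 : ℂ))
    (hε : ∀ ε : ℝ, 0 < ε → ∃ μ : Measure ℝ, IsFiniteMeasure μ ∧ μ (Set.Iio 0) = 0 ∧
      ∀ t : ℝ, 0 ≤ t → (NormedSpace.exp (A - t • (B + ε • D))).trace
        = ∫ s in Set.Ici (0 : ℝ), Complex.exp (-(t * s)) ∂μ) :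
    ∃ μ : Measure ℝ, IsFiniteMeasure μ ∧ μ (Set.Iio 0) = 0 ∧
      ∀ t : ℝ, 0 ≤ t → (NormedSpace.exp (A - t • B)).trace
        = ∫ s in Set.Ici (0 : ℝ), Complex.exp (-(t * s)) ∂μ := by
  exact bmv_reduction_to_distinct_eigenvalues' n A B D hε

end BMVAux
end

section
/- Let A be Hermitian and B Hermitian with distinct eigenvalues b_1 < ... < b_n and corresponding eigenvectors forming the standard basis (B diagonal). Then each eigenvalue of A - tB has the asymptotic expansion λ_j(t) = a_{jj} - t·b_j + O(1/t) as t → ∞, where a_{jj} are the diagonal entries of A. -/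
open Matrix Filter

section Aux
open Polynomial


theorem my_charpoly_conj {m : ℕ} (P N Q : Matrix (Fin m) (Fin m) ℂ) (h : P * Q = 1) :
    (P * N * Q).charpoly = N.charpoly := by
  have hC : ∀ M : Matrix (Fin m) (Fin m) ℂ,
      charmatrix M = scalar (Fin m) X - (C : ℂ →+* ℂ[X]).mapMatrix M := fun _ => rfl
  have hcomm : ∀ M : Matrix (Fin m) (Fin m) ℂ[X], Commute (scalar (Fin m) X) M :=
    fun M => scalar_commute X (fun r => Commute.all _ _) M
  have hPQ : ((C : ℂ →+* ℂ[X]).mapMatrix P) * ((C : ℂ →+* ℂ[X]).mapMatrix Q) = 1 := by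
    rw [← _root_.map_mul, h, _root_.map_one]
  have key : charmatrix (P * N * Q) =
      (C : ℂ →+* ℂ[X]).mapMatrix P * charmatrix N * (C : ℂ →+* ℂ[X]).mapMatrix Q := by
    rw [hC, hC, mul_sub, sub_mul]
    congr 1
    · rw [mul_assoc, (hcomm ((C : ℂ →+* ℂ[X]).mapMatrix Q)).eq, ← mul_assoc, hPQ, one_mul]
    · rw [← _root_.map_mul, ← _root_.map_mul]
  unfold Matrix.charpoly
  rw [key, det_mul, det_mul, mul_comm, ← mul_assoc, mul_comm (((C : ℂ →+* ℂ[X]).mapMatrix Q).det),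
    ← det_mul, hPQ, det_one, one_mul]

theorem my_charpoly_diag {m : ℕ} (d : Fin m → ℂ) :
    (diagonal d).charpoly = ∏ i, (X - C (d i)) := by
  unfold Matrix.charpoly
  rw [show charmatrix (diagonal d) = diagonal (fun i => X - C (d i)) by
    ext i j
    by_cases h : i = j
    · subst h; simp [charmatrix_apply_eq]
    · simp [charmatrix_apply_ne _ _ _ h, diagonal_apply_ne _ h]]
  rw [det_diagonal]

theorem my_herm_charpoly {m : ℕ} {M : Matrix (Fin m) (Fin m) ℂ} (hM : M.IsHermitian) :
    M.charpoly = ∏ i, (X - C ((hM.eigenvalues i : ℂ))) := by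
  have h1 : ((hM.eigenvectorUnitary : Matrix (Fin m) (Fin m) ℂ)) *
      (star (hM.eigenvectorUnitary : Matrix (Fin m) (Fin m) ℂ)) = 1 :=
    (Matrix.mem_unitaryGroup_iff).mp hM.eigenvectorUnitary.2
  conv_lhs => rw [hM.spectral_theorem, Unitary.conjStarAlgAut_apply]
  rw [my_charpoly_conj _ _ _ h1, my_charpoly_diag]
  rfl

theorem my_dot (w : ℕ) (v : Fin w → ℂ) :
    star v ⬝ᵥ v = ((∑ k, ‖v k‖ ^ 2 : ℝ) : ℂ) := by
  push_cast
  simp only [dotProduct, Pi.star_apply]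
  refine Finset.sum_congr rfl fun k _ => ?_
  rw [Complex.star_def, mul_comm, Complex.mul_conj, Complex.normSq_eq_norm_sq]
  norm_cast

theorem my_key {m : ℕ} {M : Matrix (Fin m) (Fin m) ℂ} (hM : M.IsHermitian) (μ : ℝ)
    (x : Fin m → ℂ) (hx : x ≠ 0) :
    ∃ i, |hM.eigenvalues i - μ| ^ 2 * ∑ k, ‖x k‖ ^ 2 ≤
      ∑ k, ‖(M *ᵥ x - (μ : ℂ) • x) k‖ ^ 2 := by
  classical
  set U := (hM.eigenvectorUnitary : Matrix (Fin m) (Fin m) ℂ) with hU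
  have h1 : U * star U = 1 := (Matrix.mem_unitaryGroup_iff).mp hM.eigenvectorUnitary.2
  have h2 : star U * U = 1 := (Matrix.mem_unitaryGroup_iff').mp hM.eigenvectorUnitary.2
  set c := star U *ᵥ x with hc
  have hxc : x = U *ᵥ c := by rw [hc, mulVec_mulVec, h1, one_mulVec]
  have hnorm : ∀ v : Fin m → ℂ, ∑ k, ‖(U *ᵥ v) k‖ ^ 2 = ∑ k, ‖v k‖ ^ 2 := by
    intro v
    have := my_dot m (U *ᵥ v)
    rw [star_mulVec, dotProduct_mulVec, vecMul_vecMul, ← Matrix.star_eq_conjTranspose, h2,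
      vecMul_one, my_dot m v] at this
    exact_mod_cast this.symm
  have hres : M *ᵥ x - (μ : ℂ) • x = U *ᵥ (fun i => ((hM.eigenvalues i : ℂ) - μ) * c i) := by
    have hD : (fun i => ((hM.eigenvalues i : ℂ) - μ) * c i)
        = diagonal (RCLike.ofReal ∘ hM.eigenvalues) *ᵥ c - (μ : ℂ) • c := by
      funext i
      simp [mulVec_diagonal]
      ring
    rw [hD, mulVec_sub, mulVec_smul, ← hxc, hc, mulVec_mulVec, mulVec_mulVec]
    rw [hU, ← Unitary.conjStarAlgAut_apply (S := ℂ), ← hM.spectral_theorem]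
  have hcx : ∑ k, ‖x k‖ ^ 2 = ∑ k, ‖c k‖ ^ 2 := by rw [hxc, hnorm]
  obtain ⟨k0, -⟩ := Function.ne_iff.mp hx
  obtain ⟨i0, -, hmin⟩ := Finset.exists_min_image Finset.univ
    (fun i => |hM.eigenvalues i - μ|) ⟨k0, Finset.mem_univ k0⟩
  refine ⟨i0, ?_⟩
  rw [hres, hnorm, hcx, Finset.mul_sum]
  refine Finset.sum_le_sum fun i _ => ?_
  have : ‖(((hM.eigenvalues i : ℂ)) - μ) * c i‖ = |hM.eigenvalues i - μ| * ‖c i‖ := by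
    rw [norm_mul]
    congr 1
    rw [show ((hM.eigenvalues i : ℂ)) - (μ:ℂ) = ((hM.eigenvalues i - μ : ℝ) : ℂ) by push_cast; ring,
      Complex.norm_real, Real.norm_eq_abs]
  rw [this, mul_pow]
  exact mul_le_mul_of_nonneg_right
    (pow_le_pow_left₀ (abs_nonneg _) (hmin i (Finset.mem_univ i)) 2)
    (pow_nonneg (norm_nonneg _) 2)

theorem my_trial (n : ℕ) (A : Matrix (Fin n) (Fin n) ℂ) (hA : A.IsHermitian)
    (b : Fin n → ℝ) (hb : Function.Injective b) (t : ℝ) (ht : t ≠ 0) (j : Fin n) :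
    (A - t • Matrix.diagonal (fun k => (b k : ℂ))) *ᵥ
        (Pi.single j 1 + (t : ℂ)⁻¹ • fun k => if k = j then 0 else A k j / ((b k : ℂ) - b j))
      - ((A j j).re - t * b j : ℝ) •
        (Pi.single j 1 + (t : ℂ)⁻¹ • fun k => if k = j then 0 else A k j / ((b k : ℂ) - b j))
      = (t : ℂ)⁻¹ • (A *ᵥ (fun k => if k = j then 0 else A k j / ((b k : ℂ) - b j))
          - A j j • fun k => if k = j then 0 else A k j / ((b k : ℂ) - b j)) := by
  set y : Fin n → ℂ := fun k => if k = j then 0 else A k j / ((b k : ℂ) - b j) with hy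
  have h0 : (starRingEnd ℂ) (A j j) = A j j := by
    have := congrFun (congrFun hA j) j
    rwa [Matrix.conjTranspose_apply, Complex.star_def] at this
  have hAjj : A j j = ((A j j).re : ℂ) := (Complex.conj_eq_iff_re.mp h0).symm
  have htc : (t : ℂ) ≠ 0 := by exact_mod_cast ht
  ext k
  rw [sub_mulVec, smul_mulVec, mulVec_add, mulVec_smul]
  set z := (A *ᵥ y) k with hz
  by_cases hk : k = j
  · subst hk
    have hyk : y k = 0 := if_pos rfl
    simp only [Pi.sub_apply, Pi.add_apply, Pi.smul_apply, mulVec_diagonal, Pi.single_eq_same,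
      smul_eq_mul, hyk, mulVec_single_one, Matrix.col_apply, mul_one, Complex.real_smul, Complex.ofReal_sub,
      Complex.ofReal_mul]
    rw [hAjj]
    field_simp
    rw [Complex.ofReal_re]
    ring
  · have hbk : (b k : ℂ) - (b j : ℂ) ≠ 0 := by
      rw [sub_ne_zero]
      exact_mod_cast fun h => hk (hb (by exact_mod_cast h))
    have hyk : y k = A k j / ((b k : ℂ) - b j) := if_neg hk
    simp only [Pi.sub_apply, Pi.add_apply, Pi.smul_apply, mulVec_diagonal,
      Pi.single_eq_of_ne hk, smul_eq_mul, hyk, mulVec_single_one, Matrix.col_apply, mul_one, Complex.real_smul,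
      Complex.ofReal_sub, Complex.ofReal_mul]
    rw [hAjj]
    field_simp
    rw [Complex.ofReal_re]
    ring


end Aux

/-- For Hermitian `A` and `B = diag(b₁ < … < bₙ)`, the eigenvalues of
`A - t B` admit, for large `t`, branches `λ_j(t) = a_{jj} - t b_j + O(1/t)` as `t → ∞`. -/
theorem eigenvalue_asymptotics (n : ℕ) (A B : Matrix (Fin n) (Fin n) ℂ)
    (hA : A.IsHermitian)
    (b : Fin n → ℝ) (hb : StrictMono b)
    (hB : B = Matrix.diagonal fun j => (b j : ℂ)) :
    ∃ T : ℝ, ∃ lam : Fin n → ℝ → ℝ,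
      (∀ t : ℝ, T < t →
        ((A - t • B).charpoly = ∏ j, (Polynomial.X - Polynomial.C ((lam j t : ℝ) : ℂ))) ∧
        Function.Injective fun j => lam j t) ∧
      ∀ j, (fun t : ℝ => lam j t - ((A j j).re - t * b j)) =O[atTop] fun t : ℝ => 1 / t := by
  classical
  subst hB
  -- Hermitian family
  have hM : ∀ t : ℝ, (A - t • Matrix.diagonal fun j => (b j : ℂ)).IsHermitian := by
    intro t
    refine hA.sub ?_
    unfold Matrix.IsHermitian
    ext i j
    by_cases h : i = j
    · subst h
      simp [Matrix.conjTranspose_apply, Matrix.diagonal_apply_eq, Complex.star_def,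
        Complex.conj_ofReal]
    · simp [Matrix.conjTranspose_apply, Matrix.diagonal_apply_ne _ h,
        Matrix.diagonal_apply_ne _ (Ne.symm h)]
  set ev : ℝ → Fin n → ℝ := fun t i => (hM t).eigenvalues i with hev
  -- constants
  set S0 : ℝ := ∑ k, ∑ l, ‖A k l‖ with hS0def
  have hS0 : 0 ≤ S0 := Finset.sum_nonneg fun k _ => Finset.sum_nonneg fun l _ => norm_nonneg _
  have hrow : ∀ k : Fin n, ∑ l, ‖A k l‖ ≤ S0 :=
    fun k => Finset.single_le_sum (fun k' _ => Finset.sum_nonneg fun l _ => norm_nonneg _)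
      (Finset.mem_univ k)
  have hent : ∀ k l : Fin n, ‖A k l‖ ≤ S0 := fun k l =>
    le_trans (Finset.single_le_sum (fun l' _ => norm_nonneg _) (Finset.mem_univ l)) (hrow k)
  have hdiagA : ∀ k : Fin n, |(A k k).re| ≤ S0 := fun k =>
    le_trans (Complex.abs_re_le_norm _) (hent k k)
  set S : ℝ := 2 * S0 + 1 with hSdef
  -- localization via Gershgorin
  have hloc : ∀ (t : ℝ) (i : Fin n), ∃ k, |ev t i + t * b k| ≤ S := by
    intro t i
    have hger : ∃ k, ((ev t i : ℂ)) ∈ Metric.closedBall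
        ((A - t • Matrix.diagonal fun j => (b j : ℂ)) k k)
        (∑ j ∈ Finset.univ.erase k, ‖(A - t • Matrix.diagonal fun j' => (b j' : ℂ)) k j‖) := by
      apply eigenvalue_mem_ball
      apply Module.End.hasEigenvalue_of_hasEigenvector
        (x := ⇑((hM t).eigenvectorBasis i))
      constructor
      · rw [Module.End.mem_eigenspace_iff, Matrix.toLin'_apply, (hM t).mulVec_eigenvectorBasis]
        funext k
        simp [Complex.real_smul]
        exact Or.inl rfl
      · exact (WithLp.ofLp_eq_zero 2).ne.2 ((hM t).eigenvectorBasis.orthonormal.ne_zero i)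
    obtain ⟨k, hk⟩ := hger
    refine ⟨k, ?_⟩
    have hdiagentry : (A - t • Matrix.diagonal fun j => (b j : ℂ)) k k
        = A k k - ((t * b k : ℝ) : ℂ) := by
      simp [Matrix.sub_apply, Matrix.diagonal_apply_eq, Complex.real_smul]
    have hradius : (∑ j ∈ Finset.univ.erase k,
        ‖(A - t • Matrix.diagonal fun j' => (b j' : ℂ)) k j‖) ≤ S0 := by
      have : ∀ j ∈ Finset.univ.erase k,
          ‖(A - t • Matrix.diagonal fun j' => (b j' : ℂ)) k j‖ = ‖A k j‖ := by
        intro j hj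
        have hkj : j ≠ k := Finset.ne_of_mem_erase hj
        simp [Matrix.sub_apply, Matrix.diagonal_apply_ne' _ hkj]
      rw [Finset.sum_congr rfl this]
      exact le_trans (Finset.sum_le_sum_of_subset_of_nonneg (Finset.erase_subset _ _)
        (fun l _ _ => norm_nonneg _)) (hrow k)
    have hdist : ‖((ev t i : ℂ)) - (A k k - ((t * b k : ℝ) : ℂ))‖ ≤ S0 := by
      rw [← hdiagentry]
      have := Metric.mem_closedBall.mp hk
      rw [Complex.dist_eq] at this
      exact le_trans (le_of_eq rfl) (this.trans hradius)
    have key : ((ev t i + t * b k : ℝ) : ℂ)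
        = (((ev t i : ℂ)) - (A k k - ((t * b k : ℝ) : ℂ))) + A k k := by push_cast; ring
    calc |ev t i + t * b k| = ‖((ev t i + t * b k : ℝ) : ℂ)‖ := by
          rw [Complex.norm_real, Real.norm_eq_abs]
      _ ≤ ‖((ev t i : ℂ)) - (A k k - ((t * b k : ℝ) : ℂ))‖ + ‖A k k‖ := by
          rw [key]; exact norm_add_le _ _
      _ ≤ S0 + S0 := add_le_add hdist (hent k k)
      _ ≤ S := by rw [hSdef]; linarith
  -- trial vector estimate
  set W : Fin n → ℝ := fun j => ∑ k,
    ‖(A *ᵥ (fun k => if k = j then 0 else A k j / ((b k : ℂ) - b j))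
      - A j j • fun k => if k = j then 0 else A k j / ((b k : ℂ) - b j)) k‖ ^ 2 with hW
  set C0 : ℝ := (∑ j, Real.sqrt (W j)) + 1 with hC0def
  have hC0one : 1 ≤ C0 := by
    rw [hC0def]
    have : 0 ≤ ∑ j, Real.sqrt (W j) := Finset.sum_nonneg fun j _ => Real.sqrt_nonneg _
    linarith
  have hC0j : ∀ j, Real.sqrt (W j) ≤ C0 := by
    intro j
    rw [hC0def]
    have := Finset.single_le_sum (fun j' (_ : j' ∈ Finset.univ) => Real.sqrt_nonneg (W j'))
      (Finset.mem_univ j)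
    linarith
  have htrial : ∀ t : ℝ, 1 ≤ t → ∀ j, ∃ i, |ev t i - ((A j j).re - t * b j)| ≤ C0 / t := by
    intro t ht1 j
    have ht0 : (0:ℝ) < t := lt_of_lt_of_le one_pos ht1
    have htne : t ≠ 0 := ne_of_gt ht0
    set y : Fin n → ℂ := fun k => if k = j then 0 else A k j / ((b k : ℂ) - b j) with hy
    set x : Fin n → ℂ := Pi.single j 1 + (t : ℂ)⁻¹ • y with hx
    have hxj : x j = 1 := by
      simp [hx, hy, Pi.single_eq_same]
    have hxne : x ≠ 0 := fun h => by simp [h] at hxj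
    obtain ⟨i, hi⟩ := my_key (hM t) ((A j j).re - t * b j) x hxne
    have hressm : ((((A j j).re - t * b j : ℝ)) : ℂ) • x = (((A j j).re - t * b j : ℝ)) • x := by
      funext k
      simp [Complex.real_smul]
    have hres := my_trial n A hA b hb.injective t htne j
    rw [← hy, ← hx] at hres
    rw [hressm, hres] at hi
    -- sum bound
    have hsum : ∑ k, ‖((t : ℂ)⁻¹ • (A *ᵥ y - A j j • y)) k‖ ^ 2 = t⁻¹ ^ 2 * W j := by
      rw [hW, Finset.mul_sum]
      refine Finset.sum_congr rfl fun k _ => ?_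
      rw [Pi.smul_apply, norm_smul]
      have : ‖(t : ℂ)⁻¹‖ = t⁻¹ := by
        rw [norm_inv, Complex.norm_real, Real.norm_eq_abs, abs_of_pos ht0]
      rw [this, mul_pow, hy]
    have hone : (1:ℝ) ≤ ∑ k, ‖x k‖ ^ 2 := by
      have := Finset.single_le_sum (fun (k : Fin n) (_ : k ∈ Finset.univ) =>
        pow_nonneg (norm_nonneg (x k)) 2) (Finset.mem_univ j)
      rw [hxj] at this
      simpa using this
    have hsq : |ev t i - ((A j j).re - t * b j)| ^ 2 ≤ t⁻¹ ^ 2 * W j := by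
      calc |ev t i - ((A j j).re - t * b j)| ^ 2
          = |ev t i - ((A j j).re - t * b j)| ^ 2 * 1 := by ring
        _ ≤ |ev t i - ((A j j).re - t * b j)| ^ 2 * ∑ k, ‖x k‖ ^ 2 :=
            mul_le_mul_of_nonneg_left hone (pow_nonneg (abs_nonneg _) 2)
        _ ≤ ∑ k, ‖((t : ℂ)⁻¹ • (A *ᵥ y - A j j • y)) k‖ ^ 2 := hi
        _ = t⁻¹ ^ 2 * W j := hsum
    refine ⟨i, ?_⟩
    have hWnn : 0 ≤ W j := Finset.sum_nonneg fun k _ => pow_nonneg (norm_nonneg _) 2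
    have hstep := Real.sqrt_le_sqrt hsq
    rw [Real.sqrt_sq (abs_nonneg _), Real.sqrt_mul (sq_nonneg _), Real.sqrt_sq (inv_nonneg.mpr ht0.le)] at hstep
    calc |ev t i - ((A j j).re - t * b j)| ≤ t⁻¹ * Real.sqrt (W j) := hstep
      _ ≤ t⁻¹ * C0 := mul_le_mul_of_nonneg_left (hC0j j) (inv_nonneg.mpr ht0.le)
      _ = C0 / t := by rw [div_eq_mul_inv, mul_comm]
  -- eventually conditions
  have hP : ∀ᶠ t : ℝ in atTop, (1 ≤ t ∧ C0 / t < 1 ∧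
      ∀ p q : Fin n, p ≠ q → 2 * S < t * |b p - b q|) := by
    have h1 : ∀ᶠ t : ℝ in atTop, (1:ℝ) ≤ t := eventually_ge_atTop 1
    have h2 : ∀ᶠ t : ℝ in atTop, C0 < t := eventually_gt_atTop C0
    have h3 : ∀ᶠ t : ℝ in atTop, ∀ p q : Fin n, p ≠ q → 2 * S < t * |b p - b q| := by
      rw [eventually_all]
      intro p
      rw [eventually_all]
      intro q
      rcases eq_or_ne p q with h | h
      · exact Eventually.of_forall fun t hne => absurd h hne
      · have habs : 0 < |b p - b q| := abs_pos.mpr (sub_ne_zero.mpr fun hh => h (hb.injective hh))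
        have := (tendsto_id (α := ℝ)).atTop_mul_const habs
        exact (this.eventually_gt_atTop (2 * S)).mono fun t ht _ => ht
    filter_upwards [h1, h2, h3] with t ht1 ht2 ht3
    refine ⟨ht1, ?_, ht3⟩
    rw [div_lt_one (lt_of_lt_of_le one_pos ht1)]
    exact ht2
  -- main per-t construction
  have main : ∀ t : ℝ, (1 ≤ t ∧ C0 / t < 1 ∧
      ∀ p q : Fin n, p ≠ q → 2 * S < t * |b p - b q|) →
      ∃ l : Fin n → ℝ,
        ((A - t • Matrix.diagonal fun j => (b j : ℂ)).charpoly
          = ∏ j, (Polynomial.X - Polynomial.C ((l j : ℂ)))) ∧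
        Function.Injective l ∧
        ∀ j, |l j - ((A j j).re - t * b j)| ≤ C0 / t := by
    rintro t ⟨ht1, htC, htS⟩
    have ht0 : (0:ℝ) < t := lt_of_lt_of_le one_pos ht1
    choose f hf using hloc t
    have uniq : ∀ (r : ℝ) (k k' : Fin n),
        |r + t * b k| ≤ S → |r + t * b k'| ≤ S → k = k' := by
      intro r k k' h1 h2
      by_contra hne
      have hgap := htS k k' hne
      have : t * |b k - b k'| ≤ 2 * S := by
        have h3 : t * (b k) - t * (b k') = (r + t * b k) - (r + t * b k') := by ring
        calc t * |b k - b k'| = |t * (b k - b k')| := by rw [abs_mul, abs_of_pos ht0]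
          _ = |(r + t * b k) - (r + t * b k')| := by rw [mul_sub, h3]
          _ ≤ |r + t * b k| + |r + t * b k'| := abs_sub _ _
          _ ≤ 2 * S := by linarith
      linarith
    have surj : ∀ j, ∃ i, f i = j ∧ |ev t i - ((A j j).re - t * b j)| ≤ C0 / t := by
      intro j
      obtain ⟨i, hi⟩ := htrial t ht1 j
      refine ⟨i, ?_, hi⟩
      have hb1 : |ev t i + t * b j| ≤ S := by
        have heq : ev t i + t * b j = (ev t i - ((A j j).re - t * b j)) + (A j j).re := by ring
        rw [heq]
        calc |(ev t i - ((A j j).re - t * b j)) + (A j j).re|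
            ≤ |ev t i - ((A j j).re - t * b j)| + |(A j j).re| := abs_add_le _ _
          _ ≤ 1 + S0 := add_le_add (hi.trans htC.le) (hdiagA j)
          _ ≤ S := by rw [hSdef]; linarith
      exact uniq (ev t i) (f i) j (hf i) hb1
    have hfs : Function.Surjective f := fun j => (surj j).imp fun i h => h.1
    have hfb := hfs.bijective_of_finite
    set e := Equiv.ofBijective f hfb with he
    have hecoe : ∀ i, e i = f i := fun i => rfl
    refine ⟨fun j => ev t (e.symm j), ?_, ?_, ?_⟩
    · rw [my_herm_charpoly (hM t)]
      exact (Equiv.prod_comp e.symm fun i =>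
        (Polynomial.X - Polynomial.C ((ev t i : ℂ)))).symm
    · intro j j' hjj'
      simp only at hjj'
      have hj : |ev t (e.symm j) + t * b j| ≤ S := by
        have := hf (e.symm j)
        rwa [← hecoe, e.apply_symm_apply] at this
      have hj' : |ev t (e.symm j') + t * b j'| ≤ S := by
        have := hf (e.symm j')
        rwa [← hecoe, e.apply_symm_apply] at this
      rw [hjj'] at hj
      exact uniq _ _ _ hj hj'
    · intro j
      obtain ⟨i, hfi, hesti⟩ := surj j
      have hsymm : e.symm j = i := by
        apply e.injective
        rw [e.apply_symm_apply, hecoe]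
        exact hfi.symm
      simp only
      rw [hsymm]
      exact hesti
  choose! l hl using main
  obtain ⟨T, hT⟩ := eventually_atTop.mp hP
  refine ⟨T, fun j t => l t j, fun t ht => ?_, fun j => ?_⟩
  · obtain ⟨hcp, hinj, -⟩ := hl t (hT t ht.le)
    exact ⟨hcp, hinj⟩
  · rw [Asymptotics.isBigO_iff]
    refine ⟨C0, ?_⟩
    filter_upwards [eventually_ge_atTop T] with t ht
    obtain ⟨h1, -, -⟩ := hT t ht
    obtain ⟨-, -, hest⟩ := hl t (hT t ht)
    have ht0 : (0:ℝ) < t := lt_of_lt_of_le one_pos h1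
    have : ‖(1:ℝ) / t‖ = 1 / t := by
      rw [Real.norm_eq_abs, abs_of_pos (by positivity)]
    rw [Real.norm_eq_abs, this]
    calc |l t j - ((A j j).re - t * b j)| ≤ C0 / t := hest j
      _ = C0 * (1 / t) := by ring
end

section
/- With ω as above and μ := ω(s) ds + ∑_{j=1}^n e^{a_{jj}} δ_{b_j}, one has ∫_0^∞ e^{-ts} dμ(s) = Tr(exp(A - tB)) for all sufficiently large t > 0. -/
open Matrix MeasureTheory Filter
open scoped Real

section AuxLemmas
open Polynomial Set Metric intervalIntegral


lemma my_charpoly_conj_s13 {m : Type*} [Fintype m] [DecidableEq m] {K : Type*} [CommRing K]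
    (U W M : Matrix m m K) (hUW : U * W = 1) (hWU : W * U = 1) :
    (U * M * W).charpoly = M.charpoly := by
  set F : Matrix m m K →+* Matrix m m K[X] := (C : K →+* K[X]).mapMatrix with hF
  have hFUW : F U * F W = 1 := by rw [← _root_.map_mul, hUW, F.map_one]
  have key : (U * M * W).charmatrix = F U * M.charmatrix * F W := by
    rw [charmatrix, charmatrix, _root_.map_mul, _root_.map_mul,
      Matrix.mul_sub, Matrix.sub_mul]
    congr 1
    rw [← (Matrix.scalar_commute (X : K[X]) (fun r => Commute.all _ _) (F U)).eq,
      Matrix.mul_assoc, hFUW, Matrix.mul_one]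
  unfold Matrix.charpoly
  rw [key, Matrix.det_mul, Matrix.det_mul]
  have h1 : det (F U) * det (F W) = 1 := by rw [← det_mul, hFUW, det_one]
  calc det (F U) * det M.charmatrix * det (F W)
      = det (F U) * det (F W) * det M.charmatrix := by ring
    _ = det M.charmatrix := by rw [h1, one_mul]


lemma my_sum_exp_eq_of_prod_X_sub_C {m : Type*} [Fintype m] (f g : m → ℂ)
    (h : ∏ i, (X - C (f i)) = ∏ i, (X - C (g i))) :
    ∑ i, Complex.exp (f i) = ∑ i, Complex.exp (g i) := by
  have key : Finset.univ.val.map f = Finset.univ.val.map g := by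
    have h2 := congrArg Polynomial.roots h
    rwa [Finset.prod_eq_multiset_prod, Finset.prod_eq_multiset_prod,
      show (Finset.univ.val.map fun i => X - C (f i))
        = ((Finset.univ.val.map f).map fun a => X - C a) by rw [Multiset.map_map]; rfl,
      show (Finset.univ.val.map fun i => X - C (g i))
        = ((Finset.univ.val.map g).map fun a => X - C a) by rw [Multiset.map_map]; rfl,
      roots_multiset_prod_X_sub_C, roots_multiset_prod_X_sub_C] at h2
  calc ∑ i, Complex.exp (f i) = ((Finset.univ.val.map f).map Complex.exp).sum := by
        rw [Multiset.map_map]; rfl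
    _ = ((Finset.univ.val.map g).map Complex.exp).sum := by rw [key]
    _ = ∑ i, Complex.exp (g i) := by rw [Multiset.map_map]; rfl

lemma my_trace_exp {m : Type*} [Fintype m] [DecidableEq m] [LinearOrder m]
    (M : Matrix m m ℂ) (hM : M.IsHermitian)
    (c : m → ℂ) (hc : M.charpoly = ∏ j, (X - C (c j))) :
    (NormedSpace.exp M).trace = ∑ j, Complex.exp (c j) := by
  set V : Matrix m m ℂ := (hM.eigenvectorUnitary : Matrix m m ℂ) with hV
  have hV1 : V * star V = 1 := Matrix.mem_unitaryGroup_iff.mp (hM.eigenvectorUnitary).2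
  have hV2 : star V * V = 1 := Matrix.mem_unitaryGroup_iff'.mp (hM.eigenvectorUnitary).2
  have hVu : IsUnit V := ⟨⟨V, star V, hV1, hV2⟩, rfl⟩
  have hVinv : V⁻¹ = star V := Matrix.inv_eq_right_inv hV1
  set D : Matrix m m ℂ := diagonal (RCLike.ofReal ∘ hM.eigenvalues) with hD
  have hsp : M = V * D * star V := hM.spectral_theorem
  -- exp
  have hexp : NormedSpace.exp M = V * NormedSpace.exp D * star V := by
    rw [hsp, ← hVinv, Matrix.exp_conj V D hVu]
  -- trace
  have htr : (NormedSpace.exp M).trace = (NormedSpace.exp D).trace := by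
    rw [hexp, Matrix.trace_mul_cycle, hV2, Matrix.one_mul]
  -- exp of diagonal
  have hdiag : NormedSpace.exp D = diagonal fun i => Complex.exp ((hM.eigenvalues i : ℂ)) := by
    rw [hD, Matrix.exp_diagonal, Pi.exp_def]
    congr 1
    funext i
    rw [Complex.exp_eq_exp_ℂ]
    rfl
  -- charpoly of D
  have hcD : D.charpoly = ∏ i, (X - C ((hM.eigenvalues i : ℂ))) := by
    rw [hD, Matrix.charpoly_of_upperTriangular _ (Matrix.blockTriangular_diagonal _)]
    simp [Matrix.diagonal_apply_eq]
  have hcM : M.charpoly = D.charpoly := by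
    conv_lhs => rw [hsp]
    exact my_charpoly_conj_s13 V (star V) D hV1 hV2
  have hsum := my_sum_exp_eq_of_prod_X_sub_C (fun i => (hM.eigenvalues i : ℂ)) c
    (by rw [← hcD, ← hcM, hc])
  rw [htr, hdiag, Matrix.trace_diagonal, hsum]


lemma my_integral_exp_Ioi (c : ℂ) (hc : c.re < 0) (a : ℝ) :
    ∫ s in Ioi a, Complex.exp (c * s) = -Complex.exp (c * a) / c := by
  have hc0 : c ≠ 0 := fun h => by simp [h] at hc
  have hint : IntegrableOn (fun s : ℝ => Complex.exp (c * s)) (Ioi a) := by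
    have h1 : IntegrableOn (fun s : ℝ => Real.exp (-(-c.re) * s)) (Ioi a) :=
      exp_neg_integrableOn_Ioi a (by linarith)
    refine (h1.integrable.mono' ?_ ?_)
    · exact (Complex.continuous_exp.comp (by continuity)).aestronglyMeasurable
    · filter_upwards with s
      rw [Complex.norm_exp]
      simp only [Complex.mul_re, Complex.ofReal_re, Complex.ofReal_im, mul_zero, sub_zero,
        neg_neg, Real.norm_eq_abs, abs_of_pos (Real.exp_pos _)]
      exact le_of_eq (by ring_nf)
  have hderiv : ∀ s ∈ Ici a, HasDerivAt (fun s : ℝ => Complex.exp (c * s) / c)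
      (Complex.exp (c * s)) s := by
    intro s _
    have h1 : HasDerivAt (fun w : ℂ => Complex.exp (c * w) / c) (Complex.exp (c * s)) (s : ℂ) := by
      have h2 : HasDerivAt (fun w : ℂ => c * w) c (s : ℂ) := by
        simpa using (hasDerivAt_id (s : ℂ)).const_mul c
      have h3 : HasDerivAt (fun w : ℂ => Complex.exp (c * w)) (Complex.exp (c * s) * c) (s : ℂ) :=
        (Complex.hasDerivAt_exp _).comp _ h2
      have h4 := h3.div_const c
      rwa [mul_div_assoc, div_self hc0, mul_one] at h4
    exact h1.comp_ofReal
  have htend : Filter.Tendsto (fun s : ℝ => Complex.exp (c * s) / c) Filter.atTop (nhds 0) := by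
    rw [tendsto_zero_iff_norm_tendsto_zero]
    have : ∀ s : ℝ, ‖Complex.exp (c * s) / c‖ = Real.exp (c.re * s) / ‖c‖ := by
      intro s
      rw [norm_div, Complex.norm_exp]
      congr 2
      simp [Complex.mul_re]
    simp_rw [this]
    have h5 : Filter.Tendsto (fun s : ℝ => Real.exp (c.re * s)) Filter.atTop (nhds 0) := by
      apply Real.tendsto_exp_atBot.comp
      exact Filter.Tendsto.const_mul_atTop_of_neg hc Filter.tendsto_id
    simpa using h5.div_const ‖c‖
  have := integral_Ioi_of_hasDerivAt_of_tendsto' hderiv hint htend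
  rw [this]
  field_simp
  ring

lemma my_circleIntegrable_smul {f : ℂ → ℂ} {c : ℂ} {R : ℝ} (a : ℂ)
    (hf : CircleIntegrable f c R) : CircleIntegrable (fun z => a • f z) c R := by
  unfold CircleIntegrable at hf ⊢
  simpa [smul_eq_mul] using hf.const_mul a

set_option maxHeartbeats 1000000 in
lemma my_contour (g : ℂ → ℂ) (R R' t : ℝ) (L : ℂ) (hR0 : 0 < R) (hRR' : R < R') (htR' : R' < t)
    (hg : ∀ z : ℂ, R ≤ ‖z‖ → AnalyticAt ℂ g z)
    (hlim : Tendsto g (Bornology.cobounded ℂ) (nhds L)) :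
    (∮ z in C(0, R'), (↑t - z)⁻¹ * g z) = 2 * π * Complex.I * (g ↑t - L) := by
  have hR'0 : 0 < R' := hR0.trans hRR'
  have ht0 : 0 < t := hR'0.trans htR'
  have htn : ‖(t : ℂ)‖ = t := by rw [Complex.norm_real, Real.norm_eq_abs, abs_of_pos ht0]
  have htR : R ≤ ‖(t : ℂ)‖ := by rw [htn]; linarith
  set φ : ℂ → ℂ := dslope g t with hφ
  -- differentiability of φ on ‖z‖ ≥ R
  have hφd : ∀ z : ℂ, R ≤ ‖z‖ → DifferentiableAt ℂ φ z := by
    intro z hz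
    by_cases hzt : z = (t : ℂ)
    · subst hzt
      obtain ⟨p, hp⟩ := hg _ hz
      exact hp.has_fpower_series_dslope_fslope.analyticAt.differentiableAt
    · have hsl : DifferentiableAt ℂ (fun w => (w - (t:ℂ))⁻¹ • (g w - g t)) z := by
        refine DifferentiableAt.fun_smul ?_ (((hg z hz).differentiableAt).sub_const _)
        exact (differentiableAt_id.sub_const _).inv (sub_ne_zero.mpr hzt)
      refine ((dslope_eventuallyEq_slope_of_ne g hzt).differentiableAt_iff).mpr ?_
      exact hsl
  -- pointwise decomposition off t
  have hdecomp : ∀ z : ℂ, z ≠ (t : ℂ) →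
      ((t : ℂ) - z)⁻¹ * g z = (-1 : ℂ) • φ z - g t • (z - (t : ℂ))⁻¹ := by
    intro z hzt
    have h1 : φ z = (z - (t:ℂ))⁻¹ • (g z - g t) := dslope_of_ne g hzt
    have h2 : z - (t : ℂ) ≠ 0 := sub_ne_zero.mpr hzt
    have h3 : (t : ℂ) - z ≠ 0 := sub_ne_zero.mpr (Ne.symm hzt)
    rw [h1]
    simp only [smul_eq_mul]
    field_simp
    ring
  -- small circle: ∮ (z - t)⁻¹ = 0
  have hIR' : (∮ z in C(0, R'), (z - (t : ℂ))⁻¹) = 0 := by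
    refine Complex.circleIntegral_eq_zero_of_differentiable_on_off_countable hR'0.le
      countable_empty ?_ ?_
    · intro z hz
      have : z ≠ (t : ℂ) := by
        intro h; subst h
        simp only [mem_closedBall, dist_zero_right, htn] at hz
        linarith
      have hd : DifferentiableAt ℂ (fun w : ℂ => (w - (t:ℂ))⁻¹) z :=
        (differentiableAt_id.sub_const _).inv (sub_ne_zero.mpr this)
      exact hd.continuousAt.continuousWithinAt
    · intro z hz
      have hzb : z ∈ ball (0:ℂ) R' := hz.1
      have : z ≠ (t : ℂ) := by
        intro h; subst h
        simp only [mem_ball, dist_zero_right, htn] at hzb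
        linarith
      exact (differentiableAt_id.sub_const _).inv (sub_ne_zero.mpr this)
  -- integrability of φ on circles of radius ≥ R'
  have hφint : ∀ ρ : ℝ, R' ≤ ρ → CircleIntegrable φ 0 ρ := by
    intro ρ hρ
    refine ContinuousOn.circleIntegrable (by linarith) ?_
    intro z hz
    have : R ≤ ‖z‖ := by
      simp only [mem_sphere_iff_norm, sub_zero] at hz
      rw [hz]; linarith
    exact (hφd z this).continuousAt.continuousWithinAt
  have hsubint : ∀ ρ : ℝ, 0 < ρ → ρ ≠ t → CircleIntegrable (fun z => (z - (t:ℂ))⁻¹) 0 ρ := by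
    intro ρ hρ hne
    rw [circleIntegrable_sub_inv_iff]
    right
    intro h
    simp only [mem_sphere_iff_norm, sub_zero, htn, abs_of_pos hρ] at h
    exact hne h.symm
  -- value on a circle of radius ρ (ρ ∈ {R', M})
  have hval : ∀ ρ : ℝ, R' ≤ ρ → ρ ≠ t →
      (∮ z in C(0, ρ), ((t:ℂ) - z)⁻¹ * g z)
        = (-1 : ℂ) • (∮ z in C(0, ρ), φ z) - g t • (∮ z in C(0, ρ), (z - (t:ℂ))⁻¹) := by
    intro ρ hρ hne
    have heq : EqOn (fun z => ((t:ℂ) - z)⁻¹ * g z)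
        (fun z => (-1 : ℂ) • φ z - g t • (z - (t:ℂ))⁻¹) (sphere (0:ℂ) ρ) := by
      intro z hz
      refine hdecomp z ?_
      intro h; subst h
      simp only [mem_sphere_iff_norm, sub_zero, htn] at hz
      exact hne hz.symm
    rw [circleIntegral.integral_congr (by linarith) heq]
    rw [circleIntegral.integral_sub (my_circleIntegrable_smul _ (hφint ρ hρ)) (my_circleIntegrable_smul _ (hsubint ρ (by linarith) hne)),
      circleIntegral.integral_smul, circleIntegral.integral_smul]
  -- annulus: φ integral independent of radius
  have hann : ∀ M : ℝ, R' ≤ M → (∮ z in C(0, M), φ z) = ∮ z in C(0, R'), φ z := by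
    intro M hM
    refine Complex.circleIntegral_eq_of_differentiable_on_annulus_off_countable hR'0 hM
      countable_empty ?_ ?_
    · intro z hz
      have : R ≤ ‖z‖ := by
        simp only [mem_diff, mem_closedBall, mem_ball, dist_zero_right, not_lt] at hz
        linarith [hz.2]
      exact (hφd z this).continuousAt.continuousWithinAt
    · intro z hz
      have hz2 := hz.1.2
      simp only [mem_closedBall, dist_zero_right, not_le] at hz2
      exact hφd z (by linarith)
  -- key identity for all large M
  have hkey : ∀ M : ℝ, max R' t < M →
      (∮ z in C(0, R'), ((t:ℂ) - z)⁻¹ * g z)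
        = (∮ z in C(0, M), ((t:ℂ) - z)⁻¹ * g z) + 2 * π * Complex.I * g t := by
    intro M hM
    have hMR' : R' ≤ M := le_of_lt (lt_of_le_of_lt (le_max_left _ _) hM)
    have hMt : t < M := lt_of_le_of_lt (le_max_right _ _) hM
    have hIM : (∮ z in C(0, M), (z - (t:ℂ))⁻¹) = 2 * π * Complex.I := by
      refine circleIntegral.integral_sub_inv_of_mem_ball ?_
      simp only [mem_ball, dist_zero_right, htn]
      exact hMt
    rw [hval R' le_rfl (ne_of_lt htR'), hval M hMR' (ne_of_gt hMt), hIR', hann M hMR', hIM]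
    simp only [smul_eq_mul, smul_zero, add_zero]
    ring
  -- limit argument
  rw [← sub_eq_zero, ← norm_eq_zero]
  by_contra hne
  have hpos : 0 < ‖(∮ z in C(0, R'), ((t:ℂ) - z)⁻¹ * g z) - 2 * π * Complex.I * (g ↑t - L)‖ :=
    lt_of_le_of_ne (norm_nonneg _) (Ne.symm hne)
  set ε := ‖(∮ z in C(0, R'), ((t:ℂ) - z)⁻¹ * g z) - 2 * π * Complex.I * (g ↑t - L)‖ with hε
  -- get C₀ from hlim
  have hev : ∀ᶠ z in Bornology.cobounded ℂ, ‖g z - L‖ < ε / (8 * π + 1) := by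
    have : {w : ℂ | ‖w - L‖ < ε / (8 * π + 1)} ∈ nhds L := by
      refine Metric.mem_nhds_iff.mpr ⟨ε / (8 * π + 1), by positivity, ?_⟩
      intro w hw
      simpa [dist_eq_norm] using hw
    exact hlim this
  rw [← comap_dist_right_atTop (0 : ℂ), eventually_comap] at hev
  rw [eventually_atTop] at hev
  obtain ⟨C₀, hC₀⟩ := hev
  set M := max (max C₀ R') (max (2 * t) (max R' t + 1)) with hMdef
  have hMbig : max R' t < M := lt_of_lt_of_le (lt_add_one _)
    (le_trans (le_max_right _ _) (le_max_right _ _))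
  have hM2t : 2 * t ≤ M := le_trans (le_max_left _ _) (le_max_right _ _)
  have hMC₀ : C₀ ≤ M := le_trans (le_max_left _ _) (le_max_left _ _)
  have hMR' : R' ≤ M := le_of_lt (lt_of_le_of_lt (le_max_left _ _) hMbig)
  have hMt : t < M := lt_of_le_of_lt (le_max_right _ _) hMbig
  have hM0 : 0 < M := ht0.trans hMt
  -- the integral over circle M of h := (t - z)⁻¹ * (g z - L)
  have hIM1 : (∮ z in C(0, M), (z - (t:ℂ))⁻¹) = 2 * π * Complex.I := by
    refine circleIntegral.integral_sub_inv_of_mem_ball ?_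
    simp only [mem_ball, dist_zero_right]
    rw [htn]; exact hMt
  have hfint : CircleIntegrable (fun z => ((t:ℂ) - z)⁻¹ * g z) 0 M := by
    have h1 : CircleIntegrable (fun z => (-1 : ℂ) • φ z - g t • (z - (t:ℂ))⁻¹) 0 M := by
      have h1a := my_circleIntegrable_smul ((-1 : ℂ)) (hφint M hMR')
      have h1b := my_circleIntegrable_smul (g t) (hsubint M (by linarith) (ne_of_gt hMt))
      have := CircleIntegrable.add h1a h1b.neg
      unfold CircleIntegrable at this ⊢
      simpa [sub_eq_add_neg] using this
    have heqn : (fun θ : ℝ => ((t:ℂ) - circleMap 0 M θ)⁻¹ * g (circleMap 0 M θ))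
        = fun θ : ℝ => ((-1 : ℂ) • φ (circleMap 0 M θ)
            - g t • (circleMap 0 M θ - (t:ℂ))⁻¹) := by
      funext θ
      have hzs : circleMap 0 M θ ∈ sphere (0:ℂ) M := circleMap_mem_sphere _ hM0.le θ
      have : circleMap 0 M θ ≠ (t:ℂ) := by
        intro h
        rw [mem_sphere_iff_norm, sub_zero, h, htn] at hzs
        exact (ne_of_gt hMt) hzs.symm
      exact hdecomp _ this
    unfold CircleIntegrable at h1 ⊢
    rw [heqn]
    exact h1
  -- pointwise: h = f + L • (z - t)⁻¹
  have hpt : (fun z : ℂ => ((t:ℂ) - z)⁻¹ * (g z - L))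
      = fun z : ℂ => ((t:ℂ) - z)⁻¹ * g z - (-L) • (z - (t:ℂ))⁻¹ := by
    funext z
    have : (z - (t:ℂ))⁻¹ = -(((t:ℂ) - z)⁻¹) := by
      rw [← inv_neg, neg_sub]
    rw [this]
    simp only [smul_eq_mul]
    ring
  have hIMh : (∮ z in C(0, M), ((t:ℂ) - z)⁻¹ * (g z - L))
      = (∮ z in C(0, M), ((t:ℂ) - z)⁻¹ * g z) + 2 * π * Complex.I * L := by
    rw [hpt, circleIntegral.integral_sub hfint (my_circleIntegrable_smul (-L) (hsubint M (by linarith) (ne_of_gt hMt))),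
      circleIntegral.integral_smul, hIM1]
    simp only [smul_eq_mul]
    ring
  -- ε = ‖∮_M h‖
  have hεeq : ε = ‖∮ z in C(0, M), ((t:ℂ) - z)⁻¹ * (g z - L)‖ := by
    have hMf : (∮ z in C(0, M), ((t:ℂ) - z)⁻¹ * g z)
        = (∮ z in C(0, R'), ((t:ℂ) - z)⁻¹ * g z) - 2 * π * Complex.I * g t := by
      rw [hkey M hMbig]; ring
    rw [hIMh, hMf, hε]
    congr 1
    ring
  -- bound
  have hMt2 : 0 < M - t := by linarith
  have hbound : ‖∮ z in C(0, M), ((t:ℂ) - z)⁻¹ * (g z - L)‖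
      ≤ 2 * π * M * (ε / (8 * π + 1) / (M - t)) := by
    refine circleIntegral.norm_integral_le_of_norm_le_const hM0.le ?_
    intro z hz
    rw [mem_sphere_iff_norm, sub_zero] at hz
    have h1 : M - t ≤ ‖(t:ℂ) - z‖ := by
      rw [norm_sub_rev]
      calc M - t = ‖z‖ - ‖(t:ℂ)‖ := by rw [hz, htn]
        _ ≤ ‖z - (t:ℂ)‖ := norm_sub_norm_le _ _
    have h2 : ‖g z - L‖ ≤ ε / (8 * π + 1) := by
      refine le_of_lt (hC₀ M hMC₀ z ?_)
      rw [dist_zero_right, hz]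
    rw [norm_mul, norm_inv]
    have h3 : ‖((t:ℂ) - z)‖⁻¹ ≤ (M - t)⁻¹ :=
      inv_anti₀ hMt2 h1
    calc ‖(t:ℂ) - z‖⁻¹ * ‖g z - L‖ ≤ (M - t)⁻¹ * (ε / (8 * π + 1)) := by
          exact mul_le_mul h3 h2 (norm_nonneg _) (by positivity)
      _ = ε / (8 * π + 1) / (M - t) := by ring
  rw [← hεeq] at hbound
  -- derive contradiction
  have hπ : (0:ℝ) < π := Real.pi_pos
  have hM2 : M / (M - t) ≤ 2 := by
    rw [div_le_iff₀ hMt2]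
    linarith
  have : 2 * π * M * (ε / (8 * π + 1) / (M - t)) < ε := by
    have h4 : 2 * π * M * (ε / (8 * π + 1) / (M - t)) = (2 * π * ε / (8 * π + 1)) * (M / (M - t)) := by
      field_simp
    rw [h4]
    have h5 : (2 * π * ε / (8 * π + 1)) * (M / (M - t)) ≤ (2 * π * ε / (8 * π + 1)) * 2 :=
      mul_le_mul_of_nonneg_left hM2 (by positivity)
    have h6 : (2 * π * ε / (8 * π + 1)) * 2 < ε := by
      rw [div_mul_eq_mul_div, div_lt_iff₀ (by positivity)]
      nlinarith
    linarith
  linarith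

set_option maxHeartbeats 1000000 in
lemma my_fubini (R' t a : ℝ) (hR'0 : 0 < R') (ht : R' < t) (ha : 0 ≤ a) (f : ℂ → ℂ)
    (hf : ContinuousOn f (Metric.sphere (0:ℂ) R')) :
    IntegrableOn (fun s : ℝ => Complex.exp (-(t * s))
        * (∮ z in C(0, R'), Complex.exp (s * z) * f z)) (Set.Ioi a) ∧
    (∫ s in Set.Ioi a, Complex.exp (-(t * s)) * (∮ z in C(0, R'), Complex.exp (s * z) * f z))
      = ∮ z in C(0, R'), Complex.exp ((z - t) * a) * ((t:ℂ) - z)⁻¹ * f z := by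
  have h2π : (0:ℝ) < 2 * π := Real.two_pi_pos
  set cm : ℝ → ℂ := circleMap 0 R' with hcm
  have hcmc : Continuous cm := continuous_circleMap 0 R'
  have hcms : ∀ θ, cm θ ∈ sphere (0:ℂ) R' := fun θ => circleMap_mem_sphere _ hR'0.le θ
  have hfc : Continuous fun θ => f (cm θ) := hf.comp_continuous hcmc hcms
  -- bound on f
  obtain ⟨C, hC⟩ := (isCompact_sphere (0:ℂ) R').exists_bound_of_continuousOn hf
  set C' := max C 0 with hC'
  have hC'0 : 0 ≤ C' := le_max_right _ _
  have hfb : ∀ θ, ‖f (cm θ)‖ ≤ C' := fun θ => (hC _ (hcms θ)).trans (le_max_left _ _)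
  -- the two-variable function
  set P : ℝ → ℝ → ℂ := fun s θ =>
    Complex.exp (-(t * s)) * ((cm θ * Complex.I) * (Complex.exp (s * cm θ) * f (cm θ))) with hP
  have hPc : Continuous (Function.uncurry P) := by
    apply Continuous.mul
    · exact Complex.continuous_exp.comp
        ((continuous_const.mul (Complex.continuous_ofReal.comp continuous_fst)).neg)
    refine Continuous.mul ((hcmc.comp continuous_snd).mul continuous_const) ?_
    refine Continuous.mul ?_ (hfc.comp continuous_snd)
    exact Complex.continuous_exp.comp
      ((Complex.continuous_ofReal.comp continuous_fst).mul (hcmc.comp continuous_snd))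
  set μ : Measure ℝ := volume.restrict (Ioi a) with hμ
  set ν : Measure ℝ := volume.restrict (Ioc 0 (2 * π)) with hν
  -- pointwise bound
  have hPb : ∀ s θ, 0 ≤ s → ‖P s θ‖ ≤ R' * C' * Real.exp (-(t - R') * s) := by
    intro s θ hs
    rw [hP]
    simp only [norm_mul, Complex.norm_exp, Complex.norm_I]
    have h1 : ‖cm θ‖ = R' := by
      rw [hcm, norm_circleMap_zero, abs_of_pos hR'0]
    have h2 : (-(↑t * ↑s) : ℂ).re = -(t * s) := by
      simp [Complex.mul_re]
    have h3 : ((↑s : ℂ) * cm θ).re ≤ s * R' := by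
      have : ((↑s : ℂ) * cm θ).re = s * (cm θ).re := by
        simp [Complex.mul_re]
      rw [this]
      have hre : (cm θ).re ≤ R' := by
        have := Complex.re_le_norm (cm θ)
        rwa [h1] at this
      nlinarith
    rw [h1, h2]
    calc Real.exp (-(t * s)) * (R' * 1 * (Real.exp ((↑s * cm θ).re) * ‖f (cm θ)‖))
        ≤ Real.exp (-(t * s)) * (R' * 1 * (Real.exp (s * R') * C')) := by
          have := Real.exp_le_exp.mpr h3
          have hnn : 0 ≤ ‖f (cm θ)‖ := norm_nonneg _
          have := hfb θ
          gcongr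
      _ = R' * C' * Real.exp (-(t - R') * s) := by
          rw [show -(t - R') * s = -(t * s) + s * R' by ring, Real.exp_add]
          ring
  -- integrability on the product
  have hPint : Integrable (Function.uncurry P) (μ.prod ν) := by
    rw [integrable_prod_iff hPc.aestronglyMeasurable]
    constructor
    · refine Filter.Eventually.of_forall fun s => ?_
      have : Continuous fun θ => P s θ := by
        have := hPc.comp (Continuous.prodMk_right s)
        exact this
      exact this.integrableOn_Ioc
    · have hg : IntegrableOn (fun s : ℝ => 2 * π * (R' * C' * Real.exp (-(t - R') * s)))
          (Ioi a) := by
        have := (exp_neg_integrableOn_Ioi a (show 0 < t - R' by linarith)).const_mul (R' * C')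
        exact this.const_mul (2 * π)
      refine hg.integrable.mono' ?_ ?_
      · exact (hPc.aestronglyMeasurable.norm.integral_prod_right')
      · refine (ae_restrict_iff' measurableSet_Ioi).mpr (Filter.Eventually.of_forall fun s hs => ?_)
        have hs0 : 0 ≤ s := le_of_lt (lt_of_le_of_lt ha hs)
        have hint : Integrable (fun θ => ‖P s θ‖) ν := by
          have : Continuous fun θ => ‖P s θ‖ := by
            have := hPc.comp (Continuous.prodMk_right s)
            simpa [Function.uncurry] using this.norm
          exact this.integrableOn_Ioc
        have h1 : ∫ θ, ‖P s θ‖ ∂ν ≤ ∫ _ in Ioc 0 (2*π), (R' * C' * Real.exp (-(t - R') * s)) := by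
          refine setIntegral_mono_on hint (integrableOn_const measure_Ioc_lt_top.ne)
            measurableSet_Ioc fun θ _ => hPb s θ hs0
        have h2 : ∫ _ in Ioc 0 (2*π), (R' * C' * Real.exp (-(t - R') * s))
            = 2 * π * (R' * C' * Real.exp (-(t - R') * s)) := by
          rw [setIntegral_const, Real.volume_real_Ioc_of_le h2π.le, smul_eq_mul,
            sub_zero]
        have h3 : 0 ≤ ∫ θ, ‖P s θ‖ ∂ν := integral_nonneg fun θ => norm_nonneg _
        have h4 : (∫ y, ‖Function.uncurry P (s, y)‖ ∂ν) = ∫ θ, ‖P s θ‖ ∂ν := rfl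
        rw [h2] at h1
        calc ‖∫ y, ‖Function.uncurry P (s, y)‖ ∂ν‖ = |∫ θ, ‖P s θ‖ ∂ν| := by rw [Real.norm_eq_abs, h4]
          _ = ∫ θ, ‖P s θ‖ ∂ν := abs_of_nonneg h3
          _ ≤ 2 * π * (R' * C' * Real.exp (-(t - R') * s)) := h1
  -- rewrite the circle integral as a ν-integral
  have hcirc : ∀ s : ℝ, Complex.exp (-(t * s)) * (∮ z in C(0, R'), Complex.exp (s * z) * f z)
      = ∫ θ, P s θ ∂ν := by
    intro s
    rw [circleIntegral, intervalIntegral.integral_of_le h2π.le]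
    simp only [deriv_circleMap]
    rw [← MeasureTheory.integral_const_mul]
    rfl
  -- the s-integrand is integrable
  have hintLHS : IntegrableOn (fun s : ℝ => Complex.exp (-(t * s))
      * (∮ z in C(0, R'), Complex.exp (s * z) * f z)) (Ioi a) := by
    have := hPint.integral_prod_left
    refine this.congr ?_
    refine Filter.Eventually.of_forall fun s => ?_
    exact (hcirc s).symm
  refine ⟨hintLHS, ?_⟩
  -- swap
  have hswap : ∫ s, (∫ θ, P s θ ∂ν) ∂μ = ∫ θ, (∫ s, P s θ ∂μ) ∂ν :=
    integral_integral_swap hPint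
  -- inner integral computation
  have hinner : ∀ θ : ℝ, (∫ s, P s θ ∂μ)
      = (cm θ * Complex.I) * (Complex.exp ((cm θ - t) * a) * ((t:ℂ) - cm θ)⁻¹ * f (cm θ)) := by
    intro θ
    have hre : (cm θ - (t:ℂ)).re < 0 := by
      have h1 : (cm θ).re ≤ R' := by
        have h2 := Complex.re_le_norm (cm θ)
        have h3 : ‖cm θ‖ = R' := by
          rw [hcm, norm_circleMap_zero, abs_of_pos hR'0]
        rwa [h3] at h2
      simp only [Complex.sub_re, Complex.ofReal_re]
      linarith
    have hptw : ∀ s : ℝ, P s θ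
        = (cm θ * Complex.I) * (Complex.exp ((cm θ - t) * s) * f (cm θ)) := by
      intro s
      rw [hP]
      simp only []
      rw [show Complex.exp (-(↑t * ↑s)) * (cm θ * Complex.I * (Complex.exp (↑s * cm θ) * f (cm θ)))
          = cm θ * Complex.I * ((Complex.exp (-(↑t * ↑s)) * Complex.exp (↑s * cm θ)) * f (cm θ)) by ring,
        ← Complex.exp_add]
      congr 3
      ring
    calc (∫ s, P s θ ∂μ)
        = ∫ s in Ioi a, (cm θ * Complex.I) * (Complex.exp ((cm θ - t) * s) * f (cm θ)) :=
          setIntegral_congr_fun measurableSet_Ioi fun s _ => hptw s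
      _ = (cm θ * Complex.I) * ((∫ s in Ioi a, Complex.exp ((cm θ - t) * s)) * f (cm θ)) := by
          rw [MeasureTheory.integral_const_mul, MeasureTheory.integral_mul_const]
      _ = (cm θ * Complex.I) * (Complex.exp ((cm θ - t) * a) * ((t:ℂ) - cm θ)⁻¹ * f (cm θ)) := by
          rw [my_integral_exp_Ioi _ hre a]
          congr 1
          rw [show -Complex.exp ((cm θ - ↑t) * ↑a) / (cm θ - ↑t)
              = Complex.exp ((cm θ - ↑t) * ↑a) * (-(cm θ - ↑t))⁻¹ by
            rw [inv_neg]; ring]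
          congr 2
          ring
  -- conclude
  calc (∫ s in Set.Ioi a, Complex.exp (-(t * s)) * (∮ z in C(0, R'), Complex.exp (s * z) * f z))
      = ∫ s, (∫ θ, P s θ ∂ν) ∂μ :=
        setIntegral_congr_fun measurableSet_Ioi fun s _ => hcirc s
    _ = ∫ θ, (∫ s, P s θ ∂μ) ∂ν := hswap
    _ = ∫ θ, (cm θ * Complex.I) * (Complex.exp ((cm θ - t) * a) * ((t:ℂ) - cm θ)⁻¹ * f (cm θ)) ∂ν := by
        exact integral_congr_ae (Filter.Eventually.of_forall fun θ => hinner θ)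
    _ = ∮ z in C(0, R'), Complex.exp ((z - t) * a) * ((t:ℂ) - z)⁻¹ * f z := by
        rw [circleIntegral, intervalIntegral.integral_of_le h2π.le]
        simp only [deriv_circleMap]
        rfl

end AuxLemmas

set_option maxHeartbeats 1600000 in
/-- With `ω` as in Statement 12 and
`μ = ω(s) ds + ∑ j e^{a_{jj}} δ_{b_j}`, one has
`∫_0^∞ e^{-t s} dμ(s) = Tr exp (A - t B)` for all sufficiently large `t > 0`. -/
theorem laplace_of_mu_eq_trace_exp (n : ℕ) (A B : Matrix (Fin (n + 1)) (Fin (n + 1)) ℂ)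
    (hA : A.IsHermitian)
    (b : Fin (n + 1) → ℝ) (hb0 : 0 < b 0) (hbmono : StrictMono b)
    (hB : B = Matrix.diagonal fun j => (b j : ℂ))
    (R : ℝ) (hR : 0 < R)
    (lam : Fin (n + 1) → ℂ → ℂ)
    (hlam_anal : ∀ j, ∀ z : ℂ, R ≤ ‖z‖ → AnalyticAt ℂ (lam j) z)
    (hlam_eig : ∀ z : ℂ, R ≤ ‖z‖ →
      (A - z • B).charpoly = ∏ j, (Polynomial.X - Polynomial.C (lam j z)))
    (r : Fin (n + 1) → ℂ → ℂ)
    (hlam_form : ∀ j, ∀ z : ℂ, R ≤ ‖z‖ → lam j z = A j j - (b j : ℂ) * z + r j z)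
    (hr0 : ∀ j, Tendsto (r j) (Bornology.cobounded ℂ) (nhds 0))
    (R' : ℝ) (hR' : R < R')
    (ω : ℝ → ℂ)
    (hω : ∀ s : ℝ, ω s = (2 * π * Complex.I)⁻¹ *
      ∑ j ∈ Finset.univ.filter (fun j => b j < s),
        (∮ z in C(0, R'), Complex.exp (lam j z + s * z))) :
    ∃ T : ℝ, 0 < T ∧ ∀ t : ℝ, T < t →
      (∫ s in Set.Ici (0 : ℝ), Complex.exp (-(t * s)) * ω s)
        + ∑ j, Complex.exp (A j j - (t : ℂ) * b j)
      = (NormedSpace.exp (A - t • B)).trace := by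
  have hR'0 : 0 < R' := hR.trans hR'
  refine ⟨R', hR'0, fun t ht => ?_⟩
  have ht0 : 0 < t := hR'0.trans ht
  have htn : ‖(t : ℂ)‖ = t := by
    rw [Complex.norm_real, Real.norm_eq_abs, abs_of_pos ht0]
  have htR : R ≤ ‖(t : ℂ)‖ := by rw [htn]; linarith
  have hπI : (2 * (π:ℂ) * Complex.I) ≠ 0 := by
    refine mul_ne_zero (mul_ne_zero two_ne_zero ?_) Complex.I_ne_zero
    exact_mod_cast Real.pi_ne_zero
  -- RHS
  have hconv : A - t • B = A - ((t:ℂ)) • B := by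
    ext i j
    simp [Matrix.sub_apply, Complex.real_smul]
  have hBH : ((t:ℝ) • B).IsHermitian := by
    rw [hB, ← Matrix.diagonal_smul]
    refine Matrix.isHermitian_diagonal_of_self_adjoint _ ?_
    rw [_root_.IsSelfAdjoint]
    funext j
    simp [Pi.smul_apply, Pi.star_apply, Complex.conj_ofReal]
  have hABH : (A - t • B).IsHermitian := hA.sub hBH
  have hRHS : (NormedSpace.exp (A - t • B)).trace = ∑ j, Complex.exp (lam j (t:ℂ)) := by
    refine my_trace_exp _ hABH (fun j => lam j (t:ℂ)) ?_
    rw [hconv]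
    exact hlam_eig (t:ℂ) htR
  -- the functions
  set Fj : Fin (n+1) → ℝ → ℂ := fun j s =>
    Complex.exp (-(t * s)) * (∮ z in C(0, R'), Complex.exp ((s:ℂ) * z) * Complex.exp (lam j z))
    with hFj
  have hbj0 : ∀ j, 0 < b j := fun j => lt_of_lt_of_le hb0 (hbmono.monotone (Fin.zero_le j))
  have hfcont : ∀ j, ContinuousOn (fun z => Complex.exp (lam j z)) (Metric.sphere (0:ℂ) R') := by
    intro j z hz
    have hzR : R ≤ ‖z‖ := by
      rw [Metric.mem_sphere, dist_zero_right] at hz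
      rw [hz]; linarith
    exact ((hlam_anal j z hzR).cexp.continuousAt).continuousWithinAt
  have hfub := fun j => my_fubini R' t (b j) hR'0 ht (hbj0 j).le _ (hfcont j)
  -- rewrite the ω-integrand
  have hpt : ∀ s : ℝ, Complex.exp (-(t * s)) * ω s
      = (2 * (π:ℂ) * Complex.I)⁻¹ * ∑ j, Set.indicator (Set.Ioi (b j)) (Fj j) s := by
    intro s
    rw [hω s]
    have h1 : ∀ j, (∮ z in C(0, R'), Complex.exp (lam j z + (s:ℂ) * z))
        = ∮ z in C(0, R'), Complex.exp ((s:ℂ) * z) * Complex.exp (lam j z) := by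
      intro j
      congr 1
      funext z
      rw [← Complex.exp_add]
      congr 1
      ring
    calc Complex.exp (-(t * s)) * ((2 * (π:ℂ) * Complex.I)⁻¹ *
          ∑ j ∈ Finset.univ.filter (fun j => b j < s),
            (∮ z in C(0, R'), Complex.exp (lam j z + (s:ℂ) * z)))
        = (2 * (π:ℂ) * Complex.I)⁻¹ * ∑ j ∈ Finset.univ.filter (fun j => b j < s),
            Complex.exp (-(t * s)) * (∮ z in C(0, R'), Complex.exp (lam j z + (s:ℂ) * z)) := by
          rw [show ∀ (e c S : ℂ), e * (c * S) = c * (e * S) from fun _ _ _ => by ring,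
            Finset.mul_sum]
      _ = (2 * (π:ℂ) * Complex.I)⁻¹ * ∑ j, Set.indicator (Set.Ioi (b j)) (Fj j) s := by
          congr 1
          rw [Finset.sum_filter]
          refine Finset.sum_congr rfl fun j _ => ?_
          rw [Set.indicator_apply]
          by_cases hbs : b j < s
          · rw [if_pos hbs, if_pos (Set.mem_Ioi.mpr hbs), hFj]
            simp only []
            rw [h1 j]
          · rw [if_neg hbs, if_neg (by simpa [Set.mem_Ioi] using hbs)]
  -- integrability of each indicator term
  have hIoiIci : ∀ j, Set.Ioi (b j) ∩ Set.Ici (0:ℝ) = Set.Ioi (b j) := by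
    intro j
    refine Set.inter_eq_left.mpr fun s hs => ?_
    have := hbj0 j
    simp only [Set.mem_Ioi] at hs
    exact le_of_lt (lt_of_le_of_lt (hbj0 j).le hs)
  have hind_int : ∀ j, Integrable (Set.indicator (Set.Ioi (b j)) (Fj j))
      (volume.restrict (Set.Ici (0:ℝ))) := by
    intro j
    rw [integrable_indicator_iff measurableSet_Ioi]
    have h2 := (hfub j).1
    rw [IntegrableOn, Measure.restrict_restrict measurableSet_Ioi, hIoiIci j]
    exact h2
  -- compute each term
  have hterm : ∀ j, (∫ s in Set.Ici (0:ℝ), Set.indicator (Set.Ioi (b j)) (Fj j) s)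
      = Complex.exp (lam j (t:ℂ)) * (2 * (π:ℂ) * Complex.I)
        - Complex.exp (A j j - (t:ℂ) * (b j)) * (2 * (π:ℂ) * Complex.I) := by
    intro j
    rw [integral_indicator measurableSet_Ioi, Measure.restrict_restrict measurableSet_Ioi,
      hIoiIci j]
    have heq := (hfub j).2
    rw [heq]
    -- now evaluate the contour integral
    set gj : ℂ → ℂ := fun z => Complex.exp (lam j z + (b j : ℂ) * z) with hgj
    have hcongr : (∮ z in C(0, R'), Complex.exp ((z - t) * (b j)) * ((t:ℂ) - z)⁻¹
          * Complex.exp (lam j z))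
        = ∮ z in C(0, R'), Complex.exp (-((b j : ℂ) * t)) • (((t:ℂ) - z)⁻¹ * gj z) := by
      congr 1
      funext z
      simp only [hgj, smul_eq_mul]
      have h5 : Complex.exp ((z - ↑t) * ↑(b j)) * Complex.exp (lam j z)
          = Complex.exp (-((↑(b j) : ℂ) * ↑t)) * Complex.exp (lam j z + ↑(b j) * z) := by
        rw [← Complex.exp_add, ← Complex.exp_add]
        congr 1
        ring
      calc Complex.exp ((z - ↑t) * ↑(b j)) * (↑t - z)⁻¹ * Complex.exp (lam j z)
          = (↑t - z)⁻¹ * (Complex.exp ((z - ↑t) * ↑(b j)) * Complex.exp (lam j z)) := by ring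
        _ = (↑t - z)⁻¹ * (Complex.exp (-((↑(b j) : ℂ) * ↑t))
              * Complex.exp (lam j z + ↑(b j) * z)) := by rw [h5]
        _ = Complex.exp (-((↑(b j) : ℂ) * ↑t)) * ((↑t - z)⁻¹
              * Complex.exp (lam j z + ↑(b j) * z)) := by ring
    rw [hcongr, circleIntegral.integral_smul]
    have hganal : ∀ z : ℂ, R ≤ ‖z‖ → AnalyticAt ℂ gj z := by
      intro z hz
      exact ((hlam_anal j z hz).add ((analyticAt_const).mul analyticAt_id)).cexp
    have hev : ∀ᶠ z in Bornology.cobounded ℂ, R ≤ ‖z‖ := by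
      rw [← Metric.comap_dist_right_atTop (0:ℂ)]
      refine eventually_comap.mpr ?_
      filter_upwards [eventually_ge_atTop R] with x hx z hz
      rw [← dist_zero_right, hz]
      exact hx
    have hlimg : Tendsto gj (Bornology.cobounded ℂ) (nhds (Complex.exp (A j j))) := by
      have h3 : Tendsto (fun z => Complex.exp (A j j + r j z)) (Bornology.cobounded ℂ)
          (nhds (Complex.exp (A j j))) := by
        have h4 : Tendsto (fun z => A j j + r j z) (Bornology.cobounded ℂ)
            (nhds (A j j + 0)) :=
          Tendsto.add (tendsto_const_nhds : Tendsto (fun _ : ℂ => A j j) _ _) (hr0 j)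
        rw [add_zero] at h4
        exact (Complex.continuous_exp.continuousAt.tendsto).comp h4
      refine Tendsto.congr' ?_ h3
      filter_upwards [hev] with z hz
      rw [hgj]
      simp only []
      congr 1
      rw [hlam_form j z hz]
      ring
    have hcont := my_contour gj R R' t (Complex.exp (A j j)) hR hR' ht hganal hlimg
    rw [hcont]
    have hgt : gj (t:ℂ) = Complex.exp (lam j (t:ℂ) + (b j : ℂ) * t) := rfl
    rw [hgt]
    have h6 : Complex.exp (-((↑(b j) : ℂ) * ↑t)) * Complex.exp (lam j ↑t + ↑(b j) * ↑t)
        = Complex.exp (lam j ↑t) := by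
      rw [← Complex.exp_add]
      congr 1
      ring
    have h7 : Complex.exp (-((↑(b j) : ℂ) * ↑t)) * Complex.exp (A j j)
        = Complex.exp (A j j - (↑t : ℂ) * ↑(b j)) := by
      rw [← Complex.exp_add]
      congr 1
      ring
    calc Complex.exp (-((↑(b j) : ℂ) * ↑t)) • (2 * (π:ℂ) * Complex.I
          * (Complex.exp (lam j ↑t + ↑(b j) * ↑t) - Complex.exp (A j j)))
        = (Complex.exp (-((↑(b j) : ℂ) * ↑t)) * Complex.exp (lam j ↑t + ↑(b j) * ↑t))
            * (2 * (π:ℂ) * Complex.I)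
          - (Complex.exp (-((↑(b j) : ℂ) * ↑t)) * Complex.exp (A j j))
            * (2 * (π:ℂ) * Complex.I) := by
          simp only [smul_eq_mul]
          ring
      _ = Complex.exp (lam j ↑t) * (2 * (π:ℂ) * Complex.I)
          - Complex.exp (A j j - (↑t : ℂ) * ↑(b j)) * (2 * (π:ℂ) * Complex.I) := by
          rw [h6, h7]
  -- put everything together
  have hLHS : (∫ s in Set.Ici (0 : ℝ), Complex.exp (-(t * s)) * ω s)
      = (2 * (π:ℂ) * Complex.I)⁻¹ * ∑ j, ((Complex.exp (lam j (t:ℂ)) * (2 * (π:ℂ) * Complex.I))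
          - Complex.exp (A j j - (t:ℂ) * (b j)) * (2 * (π:ℂ) * Complex.I)) := by
    rw [setIntegral_congr_fun measurableSet_Ici fun s _ => hpt s]
    rw [MeasureTheory.integral_const_mul, integral_finset_sum _ fun j _ => hind_int j]
    congr 1
    exact Finset.sum_congr rfl fun j _ => hterm j
  rw [hLHS, hRHS]
  rw [Finset.mul_sum]
  rw [← Finset.sum_add_distrib]
  refine Finset.sum_congr rfl fun j _ => ?_
  field_simp
  ring
end
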